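/- arXiv:1306.6728 — 9 statements merged into one kernel-verified Lean document; each statement's English description precedes it below -/
import Mathlib

section
/- If f is a flow that respects capacity constraints and the residual network G_f contains no negative-cost cycle, and f satisfies all balance constraints, then f is an optimal (minimum-cost) feasible flow. -/
open Finset

/-- A flow network: directed arcs with costs, capacities (possibly infinite),
lower bounds and vertex balances. -/
structure Network (V E : Type) where
  src : E → V
  dst : E → V
  cost : E → ℝ
  cap : E → WithTop ℝ
  low : E → ℝ
  bal : V → ℝ

variable {V E : Type}

def outflow [Fintype E] [DecidableEq V] (N : Network V E) (f : E → ℝ) (v : V) : ℝ :=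
  ∑ e, if N.src e = v then f e else 0

def inflow [Fintype E] [DecidableEq V] (N : Network V E) (f : E → ℝ) (v : V) : ℝ :=
  ∑ e, if N.dst e = v then f e else 0

/-- `f` obeys lower bounds and capacities. -/
def RespectsCap (N : Network V E) (f : E → ℝ) : Prop :=
  ∀ e, N.low e ≤ f e ∧ (f e : WithTop ℝ) ≤ N.cap e

/-- Feasible flow: capacity constraints and balance constraints. -/
def Feasible [Fintype E] [DecidableEq V] (N : Network V E) (f : E → ℝ) : Prop :=
  RespectsCap N f ∧ ∀ v, outflow N f v - inflow N f v = N.bal v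

def flowCost [Fintype E] (N : Network V E) (f : E → ℝ) : ℝ := ∑ e, N.cost e * f e

/-- Excess of a vertex: `b(v) + inflow - outflow`. -/
def excess [Fintype E] [DecidableEq V] (N : Network V E) (f : E → ℝ) (v : V) : ℝ :=
  N.bal v + inflow N f v - outflow N f v

/-- Residual steps: `Sum.inl e` is the forward residual arc of `e`,
`Sum.inr e` the backward (reverse) residual arc. -/
def stepTail (N : Network V E) : E ⊕ E → V := Sum.elim N.src N.dst
def stepHead (N : Network V E) : E ⊕ E → V := Sum.elim N.dst N.src
def stepCost (N : Network V E) : E ⊕ E → ℝ := Sum.elim N.cost (fun e => -N.cost e)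

/-- A residual step is present in the residual network `G_f`. -/
def StepOk (N : Network V E) (f : E → ℝ) : E ⊕ E → Prop :=
  Sum.elim (fun e => (f e : WithTop ℝ) < N.cap e) (fun e => N.low e < f e)

def listCost (N : Network V E) (L : List (E ⊕ E)) : ℝ := (L.map (stepCost N)).sum

/-- A (closed) directed cycle in the residual network `G_f`. -/
def IsResidCycle (N : Network V E) (f : E → ℝ) (L : List (E ⊕ E)) : Prop :=
  L ≠ [] ∧ (∀ d ∈ L, StepOk N f d) ∧
  L.Chain' (fun a b => stepHead N a = stepTail N b) ∧
  L.getLast?.map (stepHead N) = L.head?.map (stepTail N)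

/-- The residual network contains no negative-cost cycle. -/
def NoNegCycle (N : Network V E) (f : E → ℝ) : Prop :=
  ∀ L, IsResidCycle N f L → 0 ≤ listCost N L

/-- A directed path from `s` to `t` in the residual network `G_f`. -/
def IsResidPath (N : Network V E) (f : E → ℝ) (s t : V) (L : List (E ⊕ E)) : Prop :=
  (∀ d ∈ L, StepOk N f d) ∧
  L.Chain' (fun a b => stepHead N a = stepTail N b) ∧
  L.head?.map (stepTail N) = some s ∧ L.getLast?.map (stepHead N) = some t

/-!
Let `π v` be the cheapest cost of a residual trail ending at `v` (the empty trail included).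
Without negative residual cycles `π` satisfies `π (head a) ≤ π (tail a) + cost a` on every
residual arc `a`, so the reduced costs `c e + π (src e) - π (dst e)` are `≥ 0` where `f` can
increase and `≤ 0` where it can decrease. Any feasible `g` has the same vertex balances as `f`,
so the potential terms cancel in `cost g - cost f`, which thus equals the sum of reduced costs
times `g - f`: a sum of nonnegative terms.
-/

theorem reducedCost_mul_sub_nonneg (N : Network V E) {f g : E → ℝ} {π : V → ℝ}
    (hπ : ∀ a, StepOk N f a → π (stepHead N a) ≤ π (stepTail N a) + stepCost N a)
    (hg : RespectsCap N g) (e : E) :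
    0 ≤ (N.cost e + π (N.src e) - π (N.dst e)) * (g e - f e) := by
  rcases lt_trichotomy (f e) (g e) with hlt | heq | hgt
  · have hfwd : StepOk N f (Sum.inl e) :=
      lt_of_lt_of_le (WithTop.coe_lt_coe.mpr hlt) (hg e).2
    have htri := hπ _ hfwd
    simp only [stepHead, stepTail, stepCost, Sum.elim_inl] at htri
    exact mul_nonneg (by linarith) (by linarith)
  · simp [heq]
  · have hbwd : StepOk N f (Sum.inr e) := lt_of_le_of_lt (hg e).1 hgt
    have htri := hπ _ hbwd
    simp only [stepHead, stepTail, stepCost, Sum.elim_inr] at htri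
    exact mul_nonneg_of_nonpos_of_nonpos (by linarith) (by linarith)

section Potential

variable [Fintype V] [Fintype E] [DecidableEq V]

theorem sum_potential_mul_divergence (N : Network V E) (π : V → ℝ) (f : E → ℝ) :
    ∑ v, π v * (outflow N f v - inflow N f v) = ∑ e, (π (N.src e) - π (N.dst e)) * f e := by
  simp only [outflow, inflow, mul_sub, Finset.mul_sum, mul_ite, mul_zero, sub_mul,
    Finset.sum_sub_distrib]
  rw [Finset.sum_comm, Finset.sum_comm (f := fun v e => if N.dst e = v then π v * f e else 0)]
  simp

theorem flowCost_sub_eq_sum_reducedCost (N : Network V E) (π : V → ℝ) {f g : E → ℝ}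
    (hdiv : ∀ v, outflow N f v - inflow N f v = outflow N g v - inflow N g v) :
    flowCost N g - flowCost N f =
      ∑ e, (N.cost e + π (N.src e) - π (N.dst e)) * (g e - f e) := by
  have hcancel : ∑ e, (π (N.src e) - π (N.dst e)) * (g e - f e) = 0 := by
    simp only [mul_sub, Finset.sum_sub_distrib, ← sum_potential_mul_divergence, hdiv, sub_self]
  have hsplit : ∑ e, (N.cost e + π (N.src e) - π (N.dst e)) * (g e - f e) =
      flowCost N g - flowCost N f + ∑ e, (π (N.src e) - π (N.dst e)) * (g e - f e) := by
    simp only [flowCost, ← Finset.sum_sub_distrib, ← Finset.sum_add_distrib]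
    exact Finset.sum_congr rfl fun e _ => by ring
  linarith

theorem flowCost_le_of_residual_potential (N : Network V E) {f g : E → ℝ} (π : V → ℝ)
    (hπ : ∀ a, StepOk N f a → π (stepHead N a) ≤ π (stepTail N a) + stepCost N a)
    (hg : RespectsCap N g)
    (hdiv : ∀ v, outflow N f v - inflow N f v = outflow N g v - inflow N g v) :
    flowCost N f ≤ flowCost N g := by
  have hnonneg : 0 ≤ ∑ e, (N.cost e + π (N.src e) - π (N.dst e)) * (g e - f e) :=
    Finset.sum_nonneg fun e _ => reducedCost_mul_sub_nonneg N hπ hg e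
  linarith [flowCost_sub_eq_sum_reducedCost N π hdiv]

end Potential

section ResidualDistance

@[simp]
theorem listCost_append (N : Network V E) (A B : List (E ⊕ E)) :
    listCost N (A ++ B) = listCost N A + listCost N B := by
  simp [listCost]

@[simp]
theorem listCost_cons (N : Network V E) (a : E ⊕ E) (B : List (E ⊕ E)) :
    listCost N (a :: B) = stepCost N a + listCost N B := by
  simp [listCost]

@[simp]
theorem listCost_nil (N : Network V E) : listCost N [] = 0 := rfl

-- The `getLast?` condition is vacuous for `[]`, so the empty trail ends at every vertex.
def IsResidTrailTo (N : Network V E) (f : E → ℝ) (v : V) (L : List (E ⊕ E)) : Prop :=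
  L.Nodup ∧ (∀ a ∈ L, StepOk N f a) ∧ L.IsChain (fun a b => stepHead N a = stepTail N b) ∧
    ∀ a ∈ L.getLast?, stepHead N a = v

theorem isResidTrailTo_nil (N : Network V E) (f : E → ℝ) (v : V) : IsResidTrailTo N f v [] := by
  simp [IsResidTrailTo]

theorem IsResidTrailTo.append_singleton {N : Network V E} {f : E → ℝ} {a : E ⊕ E}
    {L : List (E ⊕ E)} (hL : IsResidTrailTo N f (stepTail N a) L) (haL : a ∉ L)
    (ha : StepOk N f a) : IsResidTrailTo N f (stepHead N a) (L ++ [a]) := by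
  obtain ⟨hnd, hok, hch, hend⟩ := hL
  refine ⟨hnd.append (List.nodup_singleton a) (by simpa using haL), ?_,
    hch.append (List.isChain_singleton a) (by simpa using hend), by simp⟩
  simpa [or_imp, forall_and] using And.intro hok ha

theorem IsResidTrailTo.split {N : Network V E} {f : E → ℝ} {v : V} {a : E ⊕ E}
    {A B : List (E ⊕ E)} (hL : IsResidTrailTo N f v (A ++ a :: B)) (hv : v = stepTail N a) :
    IsResidTrailTo N f (stepTail N a) A ∧ a ∉ A ∧ IsResidCycle N f (a :: B) := by
  obtain ⟨hnd, hok, hch, hend⟩ := hL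
  obtain ⟨hchA, hchB, hjoin⟩ := List.isChain_append.mp hch
  refine ⟨⟨hnd.sublist (List.sublist_append_left _ _), fun x hx => hok x (by simp [hx]), hchA,
      fun x hx => hjoin x hx a rfl⟩,
    fun haA => List.disjoint_of_nodup_append hnd haA List.mem_cons_self,
    ⟨List.cons_ne_nil _ _, fun x hx => hok x (by simp_all), hchB, ?_⟩⟩
  have hlast : (A ++ a :: B).getLast? = (a :: B).getLast? := by
    rw [List.getLast?_append, List.getLast?_eq_some_getLast (List.cons_ne_nil _ _)]; rfl
  obtain ⟨x, hx⟩ := Option.isSome_iff_exists.mp (by simp : ((a :: B).getLast?).isSome)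
  rw [hx]
  simp [← hv, hend x (hlast ▸ hx)]

variable [Fintype E]

theorem finite_setOf_isResidTrailTo (N : Network V E) (f : E → ℝ) (v : V) :
    {L | IsResidTrailTo N f v L}.Finite := by
  classical
  exact (Set.finite_coe_iff.mp (Finite.of_fintype {L : List (E ⊕ E) // L.Nodup})).subset
    fun _ hL => hL.1

-- Only trails are admitted so that the infimum runs over a finite set and is attained.
noncomputable def residDist (N : Network V E) (f : E → ℝ) (v : V) : ℝ :=
  sInf (listCost N '' {L | IsResidTrailTo N f v L})

theorem residDist_le (N : Network V E) (f : E → ℝ) {v : V} {L : List (E ⊕ E)}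
    (hL : IsResidTrailTo N f v L) : residDist N f v ≤ listCost N L :=
  csInf_le ((finite_setOf_isResidTrailTo N f v).image _).bddBelow ⟨L, hL, rfl⟩

theorem exists_isResidTrailTo_listCost_eq (N : Network V E) (f : E → ℝ) (v : V) :
    ∃ L, IsResidTrailTo N f v L ∧ listCost N L = residDist N f v :=
  Set.Nonempty.csInf_mem (s := listCost N '' {L | IsResidTrailTo N f v L})
    ⟨0, [], isResidTrailTo_nil N f v, rfl⟩
    ((finite_setOf_isResidTrailTo N f v).image _)

theorem residDist_stepHead_le {N : Network V E} {f : E → ℝ} (hnn : NoNegCycle N f)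
    {a : E ⊕ E} (ha : StepOk N f a) :
    residDist N f (stepHead N a) ≤ residDist N f (stepTail N a) + stepCost N a := by
  obtain ⟨L, hL, hcost⟩ := exists_isResidTrailTo_listCost_eq N f (stepTail N a)
  rw [← hcost]
  by_cases haL : a ∈ L
  · -- Cut the optimal trail just after `a`: the discarded tail closes a nonnegative cycle.
    obtain ⟨A, B, rfl⟩ := List.append_of_mem haL
    obtain ⟨hA, haA, hcyc⟩ := hL.split rfl
    have hcut := residDist_le N f (hA.append_singleton haA ha)
    have hcyc_nonneg := hnn _ hcyc
    simp only [listCost_append, listCost_cons, listCost_nil] at hcut hcyc_nonneg ⊢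
    linarith
  · simpa using residDist_le N f (hL.append_singleton haL ha)

end ResidualDistance

theorem stmt0_general {V E : Type} [Fintype V] [Fintype E] [DecidableEq V]
    (N : Network V E) (f : E → ℝ)
    (hbal : ∀ v, outflow N f v - inflow N f v = N.bal v)
    (hnn : NoNegCycle N f) :
    ∀ g : E → ℝ, Feasible N g → flowCost N f ≤ flowCost N g := by
  rintro g ⟨hgcap, hgbal⟩
  exact flowCost_le_of_residual_potential N (residDist N f)
    (fun _ ha => residDist_stepHead_le hnn ha) hgcap fun v => (hbal v).trans (hgbal v).symm

/-- If `f` respects the capacity constraints, satisfies all balance constraints,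
and the residual network `G_f` contains no negative-cost cycle, then `f` is an
optimal (minimum-cost) feasible flow. -/
theorem stmt0 {V E : Type} [Fintype V] [Fintype E] [DecidableEq V]
    (N : Network V E) (f : E → ℝ)
    (hcap : RespectsCap N f)
    (hbal : ∀ v, outflow N f v - inflow N f v = N.bal v)
    (hnn : NoNegCycle N f) :
    ∀ g : E → ℝ, Feasible N g → flowCost N f ≤ flowCost N g :=
  stmt0_general N f hbal hnn
end

section
/- In a connected plane graph, every circulation (flow with zero balance at every vertex) can be written as a linear combination of the clockwise face cycles: there is a potential π on the faces such that the flow on each arc e equals π(right face of e) − π(left face of e). -/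
open Finset

/-- A plane directed graph: arcs with endpoints, and for each arc the faces on
its left-hand side and right-hand side in the embedding. -/
structure PlaneGraph (V E H : Type) where
  src : E → V
  dst : E → V
  left : E → H
  right : E → H

variable {V E H : Type}

/-- Net outflow of `f` at a vertex. -/
def netAt [Fintype E] [DecidableEq V] (G : PlaneGraph V E H) (f : E → ℝ) (v : V) : ℝ :=
  (∑ e, if G.src e = v then f e else 0) - (∑ e, if G.dst e = v then f e else 0)

/-- The clockwise unit flow around face `h`: `+1` on arcs with `h` on the right,
`-1` on arcs with `h` on the left. -/
def faceFlow [DecidableEq H] (G : PlaneGraph V E H) (h : H) (e : E) : ℝ :=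
  (if G.right e = h then 1 else 0) - (if G.left e = h then 1 else 0)

/-- The underlying undirected graph of `G` is connected. -/
def PrimalConnected (G : PlaneGraph V E H) : Prop :=
  ∀ a b : V, Relation.ReflTransGen
    (fun x y => ∃ e, (G.src e = x ∧ G.dst e = y) ∨ (G.src e = y ∧ G.dst e = x)) a b

/-- The geometric dual graph of `G` is connected. -/
def DualConnected (G : PlaneGraph V E H) : Prop :=
  ∀ a b : H, Relation.ReflTransGen
    (fun x y => ∃ e, (G.left e = x ∧ G.right e = y) ∨ (G.left e = y ∧ G.right e = x)) a b

/-- The boundary of every face is a circulation (a property of plane embeddings). -/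
def FaceCond [Fintype E] [DecidableEq V] [DecidableEq H] (G : PlaneGraph V E H) : Prop :=
  ∀ (h : H) (v : V), netAt G (faceFlow G h) v = 0

/-- Euler's formula `|V| - |E| + |H| = 2` for the embedding on the sphere. -/
def EulerFormula (V E H : Type) [Fintype V] [Fintype E] [Fintype H] : Prop :=
  (Fintype.card V : ℤ) - Fintype.card E + Fintype.card H = 2

/-- The cost of sending one unit of flow clockwise around face `h`. -/
def faceCost [Fintype E] [DecidableEq H] (G : PlaneGraph V E H) (c : E → ℝ) (h : H) : ℝ :=
  (∑ e, if G.right e = h then c e else 0) - (∑ e, if G.left e = h then c e else 0)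

/-! The face coboundary `π ↦ (e ↦ π (right e) - π (left e))` maps into the circulations,
because every face boundary is a circulation. Both spaces have the same dimension: the
coboundary of the connected dual graph has rank `|H| - 1`, the cycle space of the connected
primal graph has dimension `|E| - |V| + 1`, and these agree by Euler's formula. -/

open Module Matrix

section Incidence

variable {A E : Type} [DecidableEq A]

noncomputable def incidenceMatrix (s t : E → A) : Matrix A E ℝ :=
  fun a e => (if s e = a then 1 else 0) - (if t e = a then 1 else 0)

def Linked (s t : E → A) (x y : A) : Prop :=
  ∃ e, (s e = x ∧ t e = y) ∨ (s e = y ∧ t e = x)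

lemma linked_comm (s t : E → A) : Linked t s = Linked s t := by
  ext x y
  exact exists_congr fun e => by tauto

lemma incidenceMatrix_mulVec [Fintype E] (s t : E → A) (g : E → ℝ) (a : A) :
    (incidenceMatrix s t *ᵥ g) a =
      (∑ e, if s e = a then g e else 0) - (∑ e, if t e = a then g e else 0) := by
  simp [mulVec, dotProduct, incidenceMatrix, sub_mul, ite_mul, sum_sub_distrib]

lemma incidenceMatrix_transpose_mulVec [Fintype A] (s t : E → A) (g : A → ℝ) (e : E) :
    ((incidenceMatrix s t)ᵀ *ᵥ g) e = g (s e) - g (t e) := by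
  simp [mulVec, dotProduct, incidenceMatrix, sub_mul, ite_mul, sum_sub_distrib]

lemma ker_incidenceMatrix_transpose [Fintype A] [Fintype E] (s t : E → A)
    (hconn : ∀ a b, Relation.ReflTransGen (Linked s t) a b) [Nonempty A] :
    LinearMap.ker (incidenceMatrix s t)ᵀ.mulVecLin = Submodule.span ℝ {1} := by
  refine le_antisymm (fun g hg => ?_) ?_
  · have hstep : ∀ e, g (s e) = g (t e) := fun e => by
      have := congrFun (LinearMap.mem_ker.mp hg) e
      rw [mulVecLin_apply, incidenceMatrix_transpose_mulVec] at this
      exact sub_eq_zero.mp this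
    have hconst : ∀ a b, g a = g b := fun a b => by
      induction hconn a b with
      | refl => rfl
      | tail _ hlink ih =>
        obtain ⟨e, ⟨rfl, rfl⟩ | ⟨rfl, rfl⟩⟩ := hlink <;> rw [ih, hstep]
    obtain ⟨a₀⟩ := ‹Nonempty A›
    rw [Submodule.mem_span_singleton]
    exact ⟨g a₀, funext fun a => by simp [hconst a a₀]⟩
  · rw [Submodule.span_singleton_le_iff_mem, LinearMap.mem_ker]
    funext e
    rw [mulVecLin_apply, incidenceMatrix_transpose_mulVec]
    simp

lemma rank_incidenceMatrix_add_one [Fintype A] [Fintype E] (s t : E → A)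
    (hconn : ∀ a b, Relation.ReflTransGen (Linked s t) a b) [Nonempty A] :
    (incidenceMatrix s t).rank + 1 = Fintype.card A := by
  have hker : finrank ℝ (LinearMap.ker (incidenceMatrix s t)ᵀ.mulVecLin) = 1 := by
    rw [ker_incidenceMatrix_transpose s t hconn, finrank_span_singleton]
    exact one_ne_zero
  have := LinearMap.finrank_range_add_finrank_ker (incidenceMatrix s t)ᵀ.mulVecLin
  rw [finrank_fintype_fun_eq_card, hker] at this
  rwa [← rank_transpose]

lemma finrank_ker_incidenceMatrix_add_card [Fintype A] [Fintype E] (s t : E → A)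
    (hconn : ∀ a b, Relation.ReflTransGen (Linked s t) a b) [Nonempty A] :
    finrank ℝ (LinearMap.ker (incidenceMatrix s t).mulVecLin) + Fintype.card A =
      Fintype.card E + 1 := by
  have := LinearMap.finrank_range_add_finrank_ker (incidenceMatrix s t).mulVecLin
  rw [finrank_fintype_fun_eq_card] at this
  rw [← rank_incidenceMatrix_add_one s t hconn, ← this, rank]
  ring

end Incidence

namespace PlaneGraph

noncomputable def faceCoboundary [Fintype H] [DecidableEq H] (G : PlaneGraph V E H) :
    (H → ℝ) →ₗ[ℝ] (E → ℝ) :=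
  (incidenceMatrix G.right G.left)ᵀ.mulVecLin

noncomputable def circulations [Fintype E] [DecidableEq V] (G : PlaneGraph V E H) :
    Submodule ℝ (E → ℝ) :=
  LinearMap.ker (incidenceMatrix G.src G.dst).mulVecLin

lemma faceCoboundary_apply [Fintype H] [DecidableEq H] (G : PlaneGraph V E H) (π : H → ℝ)
    (e : E) : G.faceCoboundary π e = π (G.right e) - π (G.left e) :=
  incidenceMatrix_transpose_mulVec _ _ π e

lemma faceCoboundary_eq_sum_faceFlow [Fintype H] [DecidableEq H] (G : PlaneGraph V E H)
    (π : H → ℝ) : G.faceCoboundary π = ∑ h, π h • faceFlow G h := by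
  funext e
  rw [faceCoboundary_apply]
  simp [faceFlow, mul_sub]

lemma mem_circulations [Fintype E] [DecidableEq V] (G : PlaneGraph V E H) (f : E → ℝ) :
    f ∈ G.circulations ↔ ∀ v, netAt G f v = 0 := by
  simp only [circulations, LinearMap.mem_ker, mulVecLin_apply, funext_iff, Pi.zero_apply,
    incidenceMatrix_mulVec, netAt]

lemma faceFlow_mem_circulations [Fintype E] [DecidableEq V] [DecidableEq H]
    (G : PlaneGraph V E H) (hface : FaceCond G) (h : H) : faceFlow G h ∈ G.circulations :=
  (G.mem_circulations _).mpr (hface h)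

lemma range_faceCoboundary_le_circulations [Fintype E] [Fintype H] [DecidableEq V]
    [DecidableEq H] (G : PlaneGraph V E H) (hface : FaceCond G) :
    LinearMap.range G.faceCoboundary ≤ G.circulations := by
  rintro _ ⟨π, rfl⟩
  rw [faceCoboundary_eq_sum_faceFlow]
  exact sum_mem fun h _ => Submodule.smul_mem _ _ (G.faceFlow_mem_circulations hface h)

lemma range_faceCoboundary_eq_circulations [Fintype V] [Fintype E] [Fintype H]
    [DecidableEq V] [DecidableEq H] [Nonempty V] [Nonempty H]
    (G : PlaneGraph V E H) (hconn : PrimalConnected G) (hdual : DualConnected G)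
    (heuler : EulerFormula V E H) (hface : FaceCond G) :
    LinearMap.range G.faceCoboundary = G.circulations := by
  refine Submodule.eq_of_le_of_finrank_eq (G.range_faceCoboundary_le_circulations hface) ?_
  have hfaces := rank_incidenceMatrix_add_one G.right G.left
    (by rw [linked_comm]; exact hdual)
  have hcycles := finrank_ker_incidenceMatrix_add_card G.src G.dst hconn
  change (incidenceMatrix G.right G.left)ᵀ.rank = finrank ℝ G.circulations
  rw [rank_transpose]
  unfold EulerFormula at heuler
  unfold circulations
  omega

end PlaneGraph

/-- In a connected plane graph, every circulation is a combination of the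
clockwise face cycles: there is a face potential `π` with
`f(e) = π(right(e)) - π(left(e))` for every arc `e`. -/
theorem stmt2 {V E H : Type} [Fintype V] [Fintype E] [Fintype H]
    [DecidableEq V] [DecidableEq H]
    (G : PlaneGraph V E H)
    (hconn : PrimalConnected G) (hdual : DualConnected G)
    (heuler : EulerFormula V E H) (hface : FaceCond G)
    (f : E → ℝ) (hf : ∀ v, netAt G f v = 0) :
    ∃ π : H → ℝ, ∀ e, f e = π (G.right e) - π (G.left e) := by
  rcases isEmpty_or_nonempty E with _ | ⟨⟨e₀⟩⟩
  · exact ⟨0, fun e => isEmptyElim e⟩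
  have : Nonempty V := ⟨G.src e₀⟩
  have : Nonempty H := ⟨G.left e₀⟩
  have hcirc : f ∈ G.circulations := (G.mem_circulations f).mpr hf
  rw [← G.range_faceCoboundary_eq_circulations hconn hdual heuler hface] at hcirc
  obtain ⟨π, rfl⟩ := hcirc
  exact ⟨π, G.faceCoboundary_apply π⟩
end

section
/- The face-potential problem (minimize Σ_{h∈H} c(h)π(h) subject to π(h) − π(g) ≤ u(d) for every capacitated dual dart d=(g,h)) has the same optimal value as the min-cost circulation problem on the primal plane graph, where c(h) is the cost of sending one unit of flow clockwise around face h. -/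
open Finset Module Matrix
set_option linter.unusedSectionVars false

variable {V E H : Type}

section Aux

/-- generic gradient matrix of a pair of maps `L R : E → α`. -/
def gradM {α : Type} [DecidableEq α] (L R : E → α) : Matrix E α ℝ :=
  fun e a => (if R e = a then 1 else 0) - (if L e = a then 1 else 0)

variable [Fintype V] [Fintype E] [Fintype H] [DecidableEq V] [DecidableEq H]

lemma gradM_mulVec {α : Type} [Fintype α] [DecidableEq α] (L R : E → α)
    (p : α → ℝ) (e : E) : (gradM L R).mulVec p e = p (R e) - p (L e) := by
  simp [gradM, Matrix.mulVec, dotProduct, sub_mul, Finset.sum_sub_distrib,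
    ite_mul, Finset.sum_ite_eq]

/-- the constant map as a linear map. -/
def constLM (α : Type) : ℝ →ₗ[ℝ] (α → ℝ) where
  toFun t := fun _ => t
  map_add' _ _ := rfl
  map_smul' _ _ := rfl

lemma finrank_ker_gradM {α : Type} [Fintype α] [DecidableEq α] [Nonempty α]
    (L R : E → α)
    (hc : ∀ p : α → ℝ, (∀ e, p (R e) = p (L e)) → ∀ a b, p a = p b) :
    finrank ℝ (LinearMap.ker (gradM L R).mulVecLin) = 1 := by
  have hker : LinearMap.ker (gradM L R).mulVecLin = LinearMap.range (constLM α) := by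
    ext p
    constructor
    · intro hp
      have hp' : ∀ e, p (R e) = p (L e) := by
        intro e
        have := congrFun (LinearMap.mem_ker.mp hp) e
        rw [Matrix.mulVecLin_apply, gradM_mulVec] at this
        simp only [Pi.zero_apply] at this
        linarith
      obtain ⟨a₀⟩ := ‹Nonempty α›
      exact ⟨p a₀, funext fun b => hc p hp' a₀ b⟩
    · rintro ⟨t, rfl⟩
      refine LinearMap.mem_ker.mpr (funext fun e => ?_)
      rw [Matrix.mulVecLin_apply, gradM_mulVec]
      simp [constLM]
  rw [hker]
  have hinj : Function.Injective (constLM α) := by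
    intro s t hst
    obtain ⟨a₀⟩ := ‹Nonempty α›
    exact congrFun hst a₀
  rw [LinearMap.finrank_range_of_inj hinj, finrank_self]

lemma rank_gradM {α : Type} [Fintype α] [DecidableEq α] [Nonempty α]
    (L R : E → α)
    (hc : ∀ p : α → ℝ, (∀ e, p (R e) = p (L e)) → ∀ a b, p a = p b) :
    (gradM L R).rank + 1 = Fintype.card α := by
  have := LinearMap.finrank_range_add_finrank_ker (gradM L R).mulVecLin
  rw [finrank_ker_gradM L R hc, Module.finrank_pi] at this
  exact this

variable (G : PlaneGraph V E H)

lemma netAt_eq_mulVec (f : E → ℝ) (v : V) :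
    (gradM G.dst G.src)ᵀ.mulVec f v = netAt G f v := by
  simp [gradM, Matrix.mulVec, dotProduct, Matrix.transpose, netAt, sub_mul,
    Finset.sum_sub_distrib, ite_mul]

lemma dual_mulVec_eq (π : H → ℝ) (e : E) :
    (gradM G.left G.right).mulVec π e = π (G.right e) - π (G.left e) :=
  gradM_mulVec G.left G.right π e

/-- objective identity. -/
lemma cost_swap (c : E → ℝ) (π : H → ℝ) :
    (∑ h, faceCost G c h * π h) = ∑ e, c e * (π (G.right e) - π (G.left e)) := by
  unfold faceCost
  simp only [sub_mul, Finset.sum_mul, ← Finset.sum_sub_distrib, ite_mul, zero_mul]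
  rw [Finset.sum_comm]
  simp [Finset.sum_ite_eq, mul_sub]

/-- circulations through face flows. -/
lemma face_circ (hface : FaceCond G) (π : H → ℝ) (v : V) :
    netAt G ((gradM G.left G.right).mulVec π) v = 0 := by
  have hg : (gradM G.left G.right).mulVec π = ∑ h, π h • faceFlow G h := by
    funext e
    simp only [Finset.sum_apply, Pi.smul_apply, smul_eq_mul]
    rw [dual_mulVec_eq]
    have : ∀ h : H, π h * faceFlow G h e
        = (if G.right e = h then π h else 0) - (if G.left e = h then π h else 0) := by
      intro h; simp [faceFlow, mul_sub, mul_ite]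
    simp only [this, Finset.sum_sub_distrib, Finset.sum_ite_eq, Finset.mem_univ, if_true]
  rw [← netAt_eq_mulVec, hg, ← Matrix.mulVecLin_apply, map_sum]
  have hz : ∀ h : H, (gradM G.dst G.src)ᵀ.mulVecLin (π h • faceFlow G h) = 0 := by
    intro h
    rw [_root_.map_smul]
    have h0 : (gradM G.dst G.src)ᵀ.mulVecLin (faceFlow G h) = 0 := by
      funext w
      rw [Matrix.mulVecLin_apply, netAt_eq_mulVec, Pi.zero_apply]
      exact hface h w
    rw [h0, smul_zero]
  simp only [Finset.sum_apply, hz, Pi.zero_apply, Finset.sum_const_zero]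

end Aux

/-- The face-potential problem (minimize `Σ_h c(h)π(h)` subject to the dual
dart constraints) has the same optimal value as the min-cost circulation
problem: feasible solutions correspond in both directions with equal
objective values. -/
theorem stmt3 {V E H : Type} [Fintype V] [Fintype E] [Fintype H]
    [DecidableEq V] [DecidableEq H]
    (G : PlaneGraph V E H)
    (hconn : PrimalConnected G) (hdual : DualConnected G)
    (heuler : EulerFormula V E H) (hface : FaceCond G)
    (c u ℓ : E → ℝ) (hlow : ∀ e, 0 ≤ ℓ e ∧ ℓ e ≤ u e) :
    (∀ f : E → ℝ, (∀ v, netAt G f v = 0) → (∀ e, ℓ e ≤ f e ∧ f e ≤ u e) →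
      ∃ π : H → ℝ,
        (∀ e, π (G.right e) - π (G.left e) ≤ u e ∧
              π (G.left e) - π (G.right e) ≤ -(ℓ e)) ∧
        (∑ h, faceCost G c h * π h) = ∑ e, c e * f e) ∧
    (∀ π : H → ℝ,
      (∀ e, π (G.right e) - π (G.left e) ≤ u e ∧
            π (G.left e) - π (G.right e) ≤ -(ℓ e)) →
      ∃ f : E → ℝ, (∀ v, netAt G f v = 0) ∧ (∀ e, ℓ e ≤ f e ∧ f e ≤ u e) ∧
        (∑ e, c e * f e) = ∑ h, faceCost G c h * π h) := by
  classical
  -- nonemptiness of V and H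
  have hV : Nonempty V := by
    by_contra hV
    rw [not_nonempty_iff] at hV
    have hE : IsEmpty E := ⟨fun e => hV.false (G.src e)⟩
    have hHsub : Subsingleton H := by
      constructor
      intro a b
      induction hdual a b with
      | refl => rfl
      | tail _ hstep ih =>
        obtain ⟨e, _⟩ := hstep
        exact (hE.false e).elim
    have h1 : Fintype.card H ≤ 1 := Fintype.card_le_one_iff_subsingleton.mpr hHsub
    have h2 : Fintype.card V = 0 := Fintype.card_eq_zero
    have h3 : Fintype.card E = 0 := Fintype.card_eq_zero
    unfold EulerFormula at heuler
    omega
  have hH : Nonempty H := by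
    by_contra hH
    rw [not_nonempty_iff] at hH
    have hE : IsEmpty E := ⟨fun e => hH.false (G.left e)⟩
    have hVsub : Subsingleton V := by
      constructor
      intro a b
      induction hconn a b with
      | refl => rfl
      | tail _ hstep ih =>
        obtain ⟨e, _⟩ := hstep
        exact (hE.false e).elim
    have h1 : Fintype.card V ≤ 1 := Fintype.card_le_one_iff_subsingleton.mpr hVsub
    have h2 : Fintype.card H = 0 := Fintype.card_eq_zero
    have h3 : Fintype.card E = 0 := Fintype.card_eq_zero
    unfold EulerFormula at heuler
    omega
  -- potentials constant on connected components
  have hcV : ∀ p : V → ℝ, (∀ e, p (G.src e) = p (G.dst e)) → ∀ a b, p a = p b := by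
    intro p hp a b
    induction hconn a b with
    | refl => rfl
    | tail _ hstep ih =>
      obtain ⟨e, he | he⟩ := hstep
      · rw [ih, ← he.1, ← he.2, hp e]
      · rw [ih, ← he.1, ← he.2, hp e]
  have hcH : ∀ p : H → ℝ, (∀ e, p (G.right e) = p (G.left e)) → ∀ a b, p a = p b := by
    intro p hp a b
    induction hdual a b with
    | refl => rfl
    | tail _ hstep ih =>
      obtain ⟨e, he | he⟩ := hstep
      · rw [ih, ← he.1, ← he.2, hp e]
      · rw [ih, ← he.1, ← he.2, hp e]
  -- ranks
  have hrV : (gradM G.dst G.src).rank + 1 = Fintype.card V :=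
    rank_gradM G.dst G.src hcV
  have hrH : (gradM G.left G.right).rank + 1 = Fintype.card H :=
    rank_gradM G.left G.right hcH
  -- the kernel of the transposed incidence map
  have hrn := LinearMap.finrank_range_add_finrank_ker (gradM G.dst G.src)ᵀ.mulVecLin
  rw [Module.finrank_pi] at hrn
  have hrT : (gradM G.dst G.src)ᵀ.rank = (gradM G.dst G.src).rank :=
    Matrix.rank_transpose _
  have hfr : finrank ℝ (LinearMap.range (gradM G.left G.right).mulVecLin)
      = finrank ℝ (LinearMap.ker (gradM G.dst G.src)ᵀ.mulVecLin) := by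
    have e1 : finrank ℝ (LinearMap.range (gradM G.left G.right).mulVecLin)
        = (gradM G.left G.right).rank := rfl
    have e2 : finrank ℝ (LinearMap.range (gradM G.dst G.src)ᵀ.mulVecLin)
        = (gradM G.dst G.src)ᵀ.rank := rfl
    rw [e2, hrT] at hrn
    unfold EulerFormula at heuler
    omega
  have hle : LinearMap.range (gradM G.left G.right).mulVecLin
      ≤ LinearMap.ker (gradM G.dst G.src)ᵀ.mulVecLin := by
    rintro f ⟨π, rfl⟩
    refine LinearMap.mem_ker.mpr (funext fun v => ?_)
    rw [Matrix.mulVecLin_apply, Matrix.mulVecLin_apply, netAt_eq_mulVec]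
    exact face_circ G hface π v
  have hkey : LinearMap.range (gradM G.left G.right).mulVecLin
      = LinearMap.ker (gradM G.dst G.src)ᵀ.mulVecLin :=
    Submodule.eq_of_le_of_finrank_eq hle hfr
  constructor
  · -- circulation → potential
    intro f hcirc hbd
    have hfk : f ∈ LinearMap.ker (gradM G.dst G.src)ᵀ.mulVecLin := by
      refine LinearMap.mem_ker.mpr (funext fun v => ?_)
      rw [Matrix.mulVecLin_apply, netAt_eq_mulVec]
      exact hcirc v
    rw [← hkey] at hfk
    obtain ⟨π, hπ⟩ := hfk
    have hπe : ∀ e, π (G.right e) - π (G.left e) = f e := by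
      intro e
      have := congrFun hπ e
      rw [Matrix.mulVecLin_apply, dual_mulVec_eq] at this
      exact this
    refine ⟨π, fun e => ⟨?_, ?_⟩, ?_⟩
    · linarith [(hbd e).2, hπe e]
    · linarith [(hbd e).1, hπe e]
    · rw [cost_swap]
      exact Finset.sum_congr rfl fun e _ => by rw [hπe e]
  · -- potential → circulation
    intro π hπ
    refine ⟨fun e => π (G.right e) - π (G.left e), ?_, ?_, ?_⟩
    · intro v
      have := face_circ G hface π v
      have hg : (gradM G.left G.right).mulVec π
          = fun e => π (G.right e) - π (G.left e) := funext fun e => dual_mulVec_eq G π e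
      rwa [hg] at this
    · intro e
      refine ⟨?_, ?_⟩
      · show ℓ e ≤ π (G.right e) - π (G.left e)
        linarith [(hπ e).2]
      · show π (G.right e) - π (G.left e) ≤ u e
        exact (hπ e).1
    · rw [cost_swap]
end

section
/- Let f be a flow in G obtained by combining optimal flows f_C of the subproblems G_C (formed by contracting an arc between v_c and v_o in each component) together with flows on arcs between v_c and v_o set to u(e) if c(e)<0 and 0 otherwise. If each residual network (G_C)_{f_C} contains no negative-cost cycle, then the residual network G_f contains no negative-cost cycle. -/
/-!
Split a residual cycle of `f` into the steps on arcs between `v_o` and `v_c` and, for each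
component `C`, the steps on arcs of `G_C`. The former cost at least `0`: a negative-cost arc is
saturated, so only its backward step is residual, and a non-negative-cost arc carries no flow,
so only its forward step is. For the latter, send every vertex outside `C` to `v_o`: the steps
on arcs of other components become loops at `v_o`, and deleting them leaves a cycle of the
residual network of `G_C` under `f_C`, whose cost is non-negative by assumption.
-/

open Finset

variable {V E : Type}

/-- Arcs between `v_o` and `v_c` (in either direction). -/
def ArcBtw (N : Network V E) (vo vc : V) (e : E) : Prop :=
  (N.src e = vo ∧ N.dst e = vc) ∨ (N.src e = vc ∧ N.dst e = vo)

/-- Merge `v_c` into `v_o` (contraction of a connecting arc). -/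
def mergeTo [DecidableEq V] (vo vc : V) (N : Network V E) : Network V E :=
  { N with
    src := fun e => if N.src e = vc then vo else N.src e,
    dst := fun e => if N.dst e = vc then vo else N.dst e }


def IsWalk {α W : Type*} (head tail : α → W) : W → List α → W → Prop
  | u, [], v => u = v
  | u, d :: L, v => tail d = u ∧ IsWalk head tail (head d) L v

section Walk

variable {α W W' : Type*} {head tail : α → W}

theorem isWalk_cons_iff {u v : W} (d : α) (L : List α) :
    IsWalk head tail u (d :: L) v ↔ tail d = u ∧
      (d :: L).IsChain (fun a b => head a = tail b) ∧ head ((d :: L).getLast (by simp)) = v := by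
  induction L generalizing d u with
  | nil => simp [IsWalk]
  | cons d' L ih =>
    rw [IsWalk, ih, List.isChain_cons_cons, List.getLast_cons_cons]
    constructor
    · rintro ⟨hd, hd', hc, hv⟩; exact ⟨hd, ⟨hd'.symm, hc⟩, hv⟩
    · rintro ⟨hd, ⟨hd', hc⟩, hv⟩; exact ⟨hd, hd'.symm, hc, hv⟩

theorem exists_isWalk_self_iff {L : List α} (hL : L ≠ []) :
    (∃ u, IsWalk head tail u L u) ↔
      L.IsChain (fun a b => head a = tail b) ∧ L.getLast?.map head = L.head?.map tail := by
  obtain ⟨d, L, rfl⟩ := List.exists_cons_of_ne_nil hL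
  simp only [isWalk_cons_iff, List.getLast?_eq_getLast_of_ne_nil (List.cons_ne_nil d L),
    Option.map_some, List.head?_cons, Option.some.injEq]
  constructor
  · rintro ⟨u, hu, hc, hv⟩; exact ⟨hc, hv.trans hu.symm⟩
  · rintro ⟨hc, hv⟩; exact ⟨_, rfl, hc, hv⟩

theorem IsWalk.filter_map {head' tail' : α → W'} {u v : W} {L : List α}
    (g : W → W') (p : α → Prop) [DecidablePred p] (hw : IsWalk head tail u L v)
    (hloop : ∀ d ∈ L, ¬ p d → g (tail d) = g (head d))
    (hkeep : ∀ d ∈ L, p d → head' d = g (head d) ∧ tail' d = g (tail d)) :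
    IsWalk head' tail' (g u) (L.filter p) (g v) := by
  induction L generalizing u with
  | nil => exact congrArg g hw
  | cons d L ih =>
    obtain ⟨rfl, hw⟩ := hw
    have ih := ih hw (fun d hd => hloop d (List.mem_cons_of_mem _ hd))
      (fun d hd => hkeep d (List.mem_cons_of_mem _ hd))
    by_cases hd : p d
    · obtain ⟨hhead, htail⟩ := hkeep d List.mem_cons_self hd
      rw [List.filter_cons_of_pos (by simpa using hd)]
      exact ⟨htail, hhead ▸ ih⟩
    · rw [List.filter_cons_of_neg (by simpa using hd), hloop d List.mem_cons_self hd]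
      exact ih

end Walk

theorem List.sum_map_nonneg_of_forall_fiber {α β M : Type*} [DecidableEq β] [AddCommMonoid M]
    [PartialOrder M] [IsOrderedAddMonoid M] (κ : α → β) (g : α → M) (L : List α)
    (hfib : ∀ b, 0 ≤ ((L.filter (κ · = b)).map g).sum) : 0 ≤ (L.map g).sum := by
  suffices ∀ s : Finset β, ∀ L : List α, (∀ d ∈ L, κ d ∈ s) →
      (∀ b, 0 ≤ ((L.filter (κ · = b)).map g).sum) → 0 ≤ (L.map g).sum from
    this _ L (fun d hd => List.mem_toFinset.mpr (List.mem_map_of_mem hd)) hfib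
  intro s
  induction s using Finset.induction_on with
  | empty =>
    intro L hL _
    rw [(List.eq_nil_iff_forall_not_mem.mpr fun d hd => by simpa using hL d hd : L = [])]
    simp
  | insert b s _ ih =>
    intro L hL hfib
    rw [← List.sum_map_filter_add_sum_map_filter_not (κ · = b)]
    refine add_nonneg (hfib b) (ih _ (fun d hd => ?_) (fun b' => ?_))
    · obtain ⟨hdL, hdb⟩ := List.mem_filter.mp hd
      simpa [of_decide_eq_true hdb] using hL d hdL
    · rw [List.filter_filter]
      by_cases hb : b' = b
      · subst hb
        simp
      · convert hfib b' using 4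
        grind

theorem isResidCycle_iff_isWalk {N : Network V E} {f : E → ℝ} {L : List (E ⊕ E)} :
    IsResidCycle N f L ↔
      L ≠ [] ∧ (∀ d ∈ L, StepOk N f d) ∧ ∃ u, IsWalk (stepHead N) (stepTail N) u L u :=
  ⟨fun ⟨hne, hok, hc, hv⟩ => ⟨hne, hok, (exists_isWalk_self_iff hne).mpr ⟨hc, hv⟩⟩,
    fun ⟨hne, hok, hw⟩ => ⟨hne, hok, (exists_isWalk_self_iff hne).mp hw⟩⟩

theorem stepOk_congr {N : Network V E} {f g : E → ℝ} {d : E ⊕ E}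
    (h : f (Sum.elim id id d) = g (Sum.elim id id d)) : StepOk N f d ↔ StepOk N g d := by
  cases d <;> simp_all [StepOk]

theorem stepOk_mergeTo [DecidableEq V] {N : Network V E} {f : E → ℝ} {vo vc : V} (d : E ⊕ E) :
    StepOk (mergeTo vo vc N) f d ↔ StepOk N f d := by
  cases d <;> rfl

theorem stepHead_mergeTo [DecidableEq V] (N : Network V E) (vo vc : V) (d : E ⊕ E) :
    stepHead (mergeTo vo vc N) d = if stepHead N d = vc then vo else stepHead N d := by
  cases d <;> rfl

theorem stepTail_mergeTo [DecidableEq V] (N : Network V E) (vo vc : V) (d : E ⊕ E) :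
    stepTail (mergeTo vo vc N) d = if stepTail N d = vc then vo else stepTail N d := by
  cases d <;> rfl

theorem stepCost_nonneg_of_saturating {N : Network V E} {f : E → ℝ} {d : E ⊕ E}
    (hlow : 0 ≤ N.low (Sum.elim id id d))
    (hneg : N.cost (Sum.elim id id d) < 0 →
      (f (Sum.elim id id d) : WithTop ℝ) = N.cap (Sum.elim id id d))
    (hnonneg : 0 ≤ N.cost (Sum.elim id id d) → f (Sum.elim id id d) = 0)
    (hok : StepOk N f d) : 0 ≤ stepCost N d := by
  cases d with
  | inl e =>
    simp only [StepOk, stepCost, Sum.elim_inl, id] at *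
    by_contra hc
    exact (hneg (not_le.mp hc) ▸ hok).false
  | inr e =>
    simp only [StepOk, stepCost, Sum.elim_inr, id, Left.nonneg_neg_iff] at *
    by_contra hc
    linarith [hnonneg (not_le.mp hc).le]

/-- The vertex map `v ↦ if v ∈ S then v else vo` turns the cycle into a closed walk in which the
steps of arcs outside `A` are loops at `vo`, and which agrees with the contraction of `vc` into
`vo` on the steps of arcs in `A`. -/
theorem IsResidCycle.filter_mergeTo [DecidableEq V] {N : Network V E} {f g : E → ℝ}
    {L : List (E ⊕ E)} {vo vc : V} {S : Set V} {A : Set E} [DecidablePred (· ∈ A)]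
    (hvovc : vo ≠ vc) (hvc : vc ∉ S)
    (hin : ∀ e ∈ A, (N.src e ∈ S ∨ N.src e = vo ∨ N.src e = vc) ∧
      (N.dst e ∈ S ∨ N.dst e = vo ∨ N.dst e = vc))
    (hout : ∀ e ∉ A, N.src e ∉ S ∧ N.dst e ∉ S)
    (hfg : ∀ e ∈ A, f e = g e) (hL : IsResidCycle N f L)
    (hne : L.filter (fun d => Sum.elim id id d ∈ A) ≠ []) :
    IsResidCycle (mergeTo vo vc N) g (L.filter (fun d => Sum.elim id id d ∈ A)) := by
  classical
  obtain ⟨-, hok, u, hw⟩ := isResidCycle_iff_isWalk.mp hL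
  set ψ : V → V := fun v => if v ∈ S then v else vo
  have hmerge : ∀ v, v ∈ S ∨ v = vo ∨ v = vc → (if v = vc then vo else v) = ψ v := by
    rintro v (hv | rfl | rfl)
    · simp [ψ, hv, ne_of_mem_of_not_mem hv hvc]
    · simp [ψ, hvovc]
    · simp [ψ, hvc]
  refine isResidCycle_iff_isWalk.mpr ⟨hne, fun d hd => ?_, ψ u, hw.filter_map ψ _ ?_ ?_⟩
  · obtain ⟨hdL, hdA⟩ := List.mem_filter.mp hd
    rw [stepOk_mergeTo, ← stepOk_congr (hfg _ (of_decide_eq_true hdA))]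
    exact hok d hdL
  · intro d _ hdA
    cases d <;> simp only [Sum.elim_inl, Sum.elim_inr, id] at hdA <;>
      simp [ψ, stepHead, stepTail, hout _ hdA]
  · intro d _ hdA
    rw [stepHead_mergeTo, stepTail_mergeTo]
    cases d <;> simp only [Sum.elim_inl, Sum.elim_inr, id] at hdA
    · exact ⟨hmerge _ (hin _ hdA).2, hmerge _ (hin _ hdA).1⟩
    · exact ⟨hmerge _ (hin _ hdA).1, hmerge _ (hin _ hdA).2⟩

theorem exists_eq_some_iff_mem {E ι : Type*} (EC : ι → Set E)
    (huniq : ∀ e i j, e ∈ EC i → e ∈ EC j → i = j) :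
    ∃ κ : E → Option ι, ∀ e i, κ e = some i ↔ e ∈ EC i := by
  classical
  refine ⟨fun e => if h : ∃ i, e ∈ EC i then some h.choose else none, fun e i => ?_⟩
  by_cases h : ∃ i, e ∈ EC i
  · simpa [h] using ⟨fun hi => hi ▸ h.choose_spec, fun hi => huniq e _ _ h.choose_spec hi⟩
  · simpa [h] using fun hi => h ⟨i, hi⟩

theorem src_dst_notMem_of_notMem {ι : Type*} {N : Network V E} {vo vc : V} {S : ι → Set V}
    {EC : ι → Set E} (hSvo : ∀ i, vo ∉ S i ∧ vc ∉ S i)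
    (hSdisj : ∀ i j, i ≠ j → Disjoint (S i) (S j))
    (hpart : ∀ e, ¬ ArcBtw N vo vc e → ∃ i, e ∈ EC i)
    (hends : ∀ i, ∀ e ∈ EC i,
      (N.src e ∈ S i ∨ N.src e = vo ∨ N.src e = vc) ∧
      (N.dst e ∈ S i ∨ N.dst e = vo ∨ N.dst e = vc))
    {i : ι} {e : E} (he : e ∉ EC i) : N.src e ∉ S i ∧ N.dst e ∉ S i := by
  by_cases hbtw : ArcBtw N vo vc e
  · rcases hbtw with ⟨hs, hd⟩ | ⟨hs, hd⟩ <;> simp [hs, hd, hSvo i]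
  · obtain ⟨j, hj⟩ := hpart e hbtw
    have hji : j ≠ i := by rintro rfl; exact he hj
    have hnot : ∀ v, v ∈ S j ∨ v = vo ∨ v = vc → v ∉ S i := by
      rintro v (hv | rfl | rfl)
      · exact (hSdisj j i hji).notMem_of_mem_left hv
      · exact (hSvo i).1
      · exact (hSvo i).2
    exact ⟨hnot _ (hends j e hj).1, hnot _ (hends j e hj).2⟩

theorem stmt8_general {V E ι : Type} [DecidableEq V]
    (N : Network V E) (vo vc : V) (hvovc : vo ≠ vc)
    (hlow : ∀ e, 0 ≤ N.low e)
    (S : ι → Set V) (EC : ι → Set E) (fC : ι → E → ℝ) (f : E → ℝ)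
    -- the components do not contain `v_o` nor `v_c`, and are pairwise disjoint
    (hSvo : ∀ i, vo ∉ S i ∧ vc ∉ S i)
    (hSdisj : ∀ i j, i ≠ j → Disjoint (S i) (S j))
    -- every arc other than arcs between `v_o` and `v_c` is in exactly one `G_C`
    (hpart : ∀ e, ¬ ArcBtw N vo vc e → ∃! i, e ∈ EC i)
    (hBtwE : ∀ i, ∀ e ∈ EC i, ¬ ArcBtw N vo vc e)
    -- arcs of `G_C` have both endpoints in `C ∪ {v_o, v_c}`
    (hends : ∀ i, ∀ e ∈ EC i,
      (N.src e ∈ S i ∨ N.src e = vo ∨ N.src e = vc) ∧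
      (N.dst e ∈ S i ∨ N.dst e = vo ∨ N.dst e = vc))
    -- `f` agrees with `f_C` on the arcs of `G_C`
    (hagree : ∀ i, ∀ e ∈ EC i, f e = fC i e)
    -- on arcs between `v_o` and `v_c`: `f(e) = u(e)` if `c(e) < 0`, else `f(e) = 0`
    (hB : ∀ e, ArcBtw N vo vc e →
      (N.cost e < 0 → (f e : WithTop ℝ) = N.cap e) ∧ (0 ≤ N.cost e → f e = 0))
    -- each residual network `(G_C)_{f_C}` has no negative-cost cycle
    (hC : ∀ i, ∀ L : List (E ⊕ E), (∀ d ∈ L, Sum.elim id id d ∈ EC i) →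
      IsResidCycle (mergeTo vo vc N) (fC i) L → 0 ≤ listCost (mergeTo vo vc N) L) :
    NoNegCycle N f := by
  classical
  obtain ⟨κ, hκ⟩ := exists_eq_some_iff_mem EC fun e i j hi hj =>
    (hpart e (hBtwE i e hi)).unique hi hj
  intro L hL
  refine List.sum_map_nonneg_of_forall_fiber (fun d => κ (Sum.elim id id d)) (stepCost N) L ?_
  rintro (_ | i)
  · refine List.sum_nonneg fun c hc => ?_
    obtain ⟨d, hd, rfl⟩ := List.mem_map.mp hc
    obtain ⟨hdL, hdκ⟩ := List.mem_filter.mp hd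
    have hbtw : ArcBtw N vo vc (Sum.elim id id d) := by
      by_contra hb
      obtain ⟨i, hi, -⟩ := hpart _ hb
      simp [(hκ _ i).mpr hi] at hdκ
    exact stepCost_nonneg_of_saturating (hlow _) (hB _ hbtw).1 (hB _ hbtw).2 (hL.2.1 d hdL)
  · rw [List.filter_congr (q := fun d => Sum.elim id id d ∈ EC i) (by simp [hκ])]
    by_cases hne : L.filter (fun d => Sum.elim id id d ∈ EC i) = []
    · simp [hne]
    · refine hC i _ (fun d hd => by simpa using (List.mem_filter.mp hd).2) ?_
      exact hL.filter_mergeTo hvovc (hSvo i).2 (hends i)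
        (fun e => src_dst_notMem_of_notMem hSvo hSdisj (fun e he => (hpart e he).exists) hends)
        (hagree i) hne

/-- Combining optimal flows of the subproblems `G_C` (with `v_c` merged into
`v_o`) with the greedy flow on arcs between `v_c` and `v_o` yields a flow
whose residual network has no negative-cost cycle. -/
theorem stmt8 {V E ι : Type} [Fintype V] [Fintype E] [DecidableEq V]
    (N : Network V E) (vo vc : V) (hvovc : vo ≠ vc)
    (hlow : ∀ e, 0 ≤ N.low e)
    (S : ι → Set V) (EC : ι → Set E) (fC : ι → E → ℝ) (f : E → ℝ)
    -- the components do not contain `v_o` nor `v_c`, and are pairwise disjoint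
    (hSvo : ∀ i, vo ∉ S i ∧ vc ∉ S i)
    (hSdisj : ∀ i j, i ≠ j → Disjoint (S i) (S j))
    -- every arc other than arcs between `v_o` and `v_c` is in exactly one `G_C`
    (hpart : ∀ e, ¬ ArcBtw N vo vc e → ∃! i, e ∈ EC i)
    (hBtwE : ∀ i, ∀ e ∈ EC i, ¬ ArcBtw N vo vc e)
    -- arcs of `G_C` have both endpoints in `C ∪ {v_o, v_c}`
    (hends : ∀ i, ∀ e ∈ EC i,
      (N.src e ∈ S i ∨ N.src e = vo ∨ N.src e = vc) ∧
      (N.dst e ∈ S i ∨ N.dst e = vo ∨ N.dst e = vc))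
    -- `f` agrees with `f_C` on the arcs of `G_C`
    (hagree : ∀ i, ∀ e ∈ EC i, f e = fC i e)
    -- on arcs between `v_o` and `v_c`: `f(e) = u(e)` if `c(e) < 0`, else `f(e) = 0`
    (hB : ∀ e, ArcBtw N vo vc e →
      (N.cost e < 0 → (f e : WithTop ℝ) = N.cap e) ∧ (0 ≤ N.cost e → f e = 0))
    -- each residual network `(G_C)_{f_C}` has no negative-cost cycle
    (hC : ∀ i, ∀ L : List (E ⊕ E), (∀ d ∈ L, Sum.elim id id d ∈ EC i) →
      IsResidCycle (mergeTo vo vc N) (fC i) L → 0 ≤ listCost (mergeTo vo vc N) L) :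
    NoNegCycle N f :=
  stmt8_general N vo vc hvovc hlow S EC fC f hSvo hSdisj hpart hBtwE hends hagree hB hC
end

section
/- A feasible flow f in a flow network is of minimum cost if and only if the residual network G_f contains no directed cycle of negative total cost. -/
open Finset

variable {V E : Type}

/-!
If `G_f` has a negative cycle, pushing a small amount `ε` of flow around it keeps `f` feasible
and lowers its cost. Conversely, for any feasible `g` the difference `d = g - f` is a
circulation that only uses arcs of `G_f`. Following a step of `d` that carries positive flow,
conservation always lets the walk continue, so the support of `d` contains a simple residual
cycle. Subtracting that cycle, scaled by the smallest amount of `d` along it, leaves a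
circulation of the same kind with smaller support, and the cost of `d` splits into the cost of
the rest plus a nonnegative multiple of the cycle's cost. By induction, `cost g - cost f ≥ 0`.
-/

open Filter Topology

theorem Function.exists_mem_periodicPts {α : Type*} [Finite α] [Nonempty α] (f : α → α) :
    ∃ x, x ∈ Function.periodicPts f := by
  obtain ⟨m, n, hmn, heq⟩ :=
    Finite.exists_ne_map_eq_of_infinite fun n => f^[n] (Classical.arbitrary α)
  wlog h : m < n generalizing m n
  · exact this n m hmn.symm heq.symm (by omega)
  refine ⟨f^[m] (Classical.arbitrary α),
    Function.mk_mem_periodicPts (n := n - m) (by omega) ?_⟩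
  rw [Function.IsPeriodicPt, Function.IsFixedPt, ← Function.iterate_add_apply,
    Nat.sub_add_cancel h.le, heq]

theorem exists_nodup_cycle_chain {α : Type*} [Finite α] {P : α → Prop} {R : α → α → Prop}
    (hP : ∃ a, P a) (hR : ∀ a, P a → ∃ b, P b ∧ R a b) :
    ∃ L : List α, L ≠ [] ∧ L.Nodup ∧ (∀ a ∈ L, P a) ∧
      Cycle.Chain R (L : Cycle α) := by
  choose! F hFP hFR using hR
  let G : {a // P a} → {a // P a} := fun a => ⟨F a, hFP a a.2⟩
  have : Nonempty {a // P a} := nonempty_subtype.mpr hP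
  obtain ⟨y, hy⟩ := Function.exists_mem_periodicPts G
  have hchain : Cycle.Chain (fun a b => R a.1 b.1) (Function.periodicOrbit G y) :=
    (Function.periodicOrbit_chain' _ hy).mpr fun n => by
      rw [Function.iterate_succ_apply']
      exact hFR _ (G^[n] y).2
  refine ⟨((List.range (Function.minimalPeriod G y)).map fun n => G^[n] y).map Subtype.val,
    ?_, ?_, ?_, ?_⟩
  · simpa only [ne_eq, List.map_eq_nil_iff, List.range_eq_nil] using
      (Function.minimalPeriod_pos_of_mem_periodicPts hy).ne'
  · exact (Cycle.nodup_coe_iff.mp Function.nodup_periodicOrbit).map Subtype.val_injective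
  · intro a ha
    obtain ⟨x, -, rfl⟩ := List.mem_map.mp ha
    exact x.2
  · rw [← Cycle.map_coe, Cycle.chain_map]
    exact hchain

theorem List.sum_map_sub_of_isChain {α β G : Type*} [AddCommGroup G] (t h : α → β)
    (φ : β → G) {a : α} {l : List α} (hl : (a :: l).IsChain fun x y => h x = t y) :
    ((a :: l).map fun x => φ (t x) - φ (h x)).sum =
      φ (t a) - φ (h ((a :: l).getLast (List.cons_ne_nil a l))) := by
  induction l generalizing a with
  | nil => simp
  | cons b l ih =>
    obtain ⟨hab, hl⟩ := List.isChain_cons_cons.mp hl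
    rw [List.map_cons, List.sum_cons, ih hl, List.getLast_cons_cons, hab]
    abel

lemma eventually_le_add_mul {a x c : ℝ} (hx : a ≤ x) (hc : c < 0 → a < x) :
    ∀ᶠ ε in 𝓝[>] (0 : ℝ), a ≤ x + ε * c := by
  rcases lt_or_ge c 0 with hneg | hnonneg
  · have hlim : Tendsto (fun ε => x + ε * c) (𝓝[>] 0) (𝓝 x) :=
      tendsto_nhdsWithin_of_tendsto_nhds <|
        (by fun_prop : Continuous fun ε : ℝ => x + ε * c).tendsto' 0 x (by simp)
    exact hlim.eventually (eventually_ge_nhds (hc hneg))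
  · filter_upwards [self_mem_nhdsWithin] with ε (hε : 0 < ε)
    nlinarith

lemma eventually_coe_add_mul_le {b : WithTop ℝ} {x c : ℝ} (hx : (x : WithTop ℝ) ≤ b)
    (hc : 0 < c → (x : WithTop ℝ) < b) :
    ∀ᶠ ε in 𝓝[>] (0 : ℝ), ((x + ε * c : ℝ) : WithTop ℝ) ≤ b := by
  induction b with
  | top => simp
  | coe b =>
    simp only [WithTop.coe_le_coe, WithTop.coe_lt_coe] at hx hc ⊢
    filter_upwards [eventually_le_add_mul (a := -b) (x := -x) (c := -c) (by linarith)
      fun h => by linarith [hc (by linarith)]] with ε hε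
    linarith

namespace Network

def flowCostₗ [Fintype E] (N : Network V E) : (E → ℝ) →ₗ[ℝ] ℝ where
  toFun := flowCost N
  map_add' f g := by simp only [flowCost, Pi.add_apply, mul_add, sum_add_distrib]
  map_smul' c f := by
    simp only [flowCost, Pi.smul_apply, smul_eq_mul, RingHom.id_apply, mul_sum]
    exact sum_congr rfl fun _ _ => by ring

@[simp]
lemma flowCostₗ_apply [Fintype E] (N : Network V E) (f : E → ℝ) :
    N.flowCostₗ f = flowCost N f :=
  rfl

def netOutflow [Fintype E] [DecidableEq V] (N : Network V E) (v : V) :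
    (E → ℝ) →ₗ[ℝ] ℝ where
  toFun f := outflow N f v - inflow N f v
  map_add' f g := by
    simp only [outflow, inflow, Pi.add_apply, ← sum_filter, sum_add_distrib]
    ring
  map_smul' c f := by
    simp only [outflow, inflow, Pi.smul_apply, ← sum_filter, smul_eq_mul, RingHom.id_apply,
      ← mul_sum]
    ring

lemma feasible_iff [Fintype E] [DecidableEq V] (N : Network V E) {f : E → ℝ} :
    Feasible N f ↔ RespectsCap N f ∧ ∀ v, N.netOutflow v f = N.bal v :=
  Iff.rfl

def IsCirculation [Fintype E] [DecidableEq V] (N : Network V E) (d : E → ℝ) : Prop :=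
  ∀ v, N.netOutflow v d = 0

/-- The flow `d` moves along the residual step `s`; a negative value on `.inl e` is flow along
`.inr e`. -/
def stepValue (d : E → ℝ) : E ⊕ E → ℝ := Sum.elim d (-d)

lemma stepValue_swap (d : E → ℝ) (s : E ⊕ E) : stepValue d s.swap = -stepValue d s := by
  cases s <;> simp [stepValue]

lemma stepValue_add (d d' : E → ℝ) (s : E ⊕ E) :
    stepValue (d + d') s = stepValue d s + stepValue d' s := by
  cases s <;> simp [stepValue, add_comm]

lemma stepValue_sub_smul (d d' : E → ℝ) (δ : ℝ) (s : E ⊕ E) :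
    stepValue (d - δ • d') s = stepValue d s - δ * stepValue d' s := by
  cases s <;> simp only [stepValue, Sum.elim_inl, Sum.elim_inr, Pi.sub_apply, Pi.smul_apply,
    Pi.neg_apply, smul_eq_mul]
  ring

lemma netOutflow_eq_sum_stepValue [Fintype E] [DecidableEq V] (N : Network V E) (v : V)
    (d : E → ℝ) : N.netOutflow v d = ∑ s, if stepTail N s = v then stepValue d s else 0 := by
  rw [Fintype.sum_sum_type]
  simp only [netOutflow, LinearMap.coe_mk, AddHom.coe_mk, outflow, inflow, stepTail, stepValue,
    Sum.elim_inl, Sum.elim_inr, Pi.neg_apply, sub_eq_add_neg, ← sum_neg_distrib, apply_ite,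
    neg_zero]
  rfl -- the two sides differ only in their `Decidable` instances

def IsResidualDirection (N : Network V E) (f d : E → ℝ) : Prop :=
  ∀ s, 0 < stepValue d s → StepOk N f s

lemma isResidualDirection_sub {N : Network V E} {f g : E → ℝ} (hg : RespectsCap N g) :
    IsResidualDirection N f (g - f) := by
  rintro (e | e) he <;> simp only [stepValue, Sum.elim_inl, Sum.elim_inr, Pi.sub_apply,
    Pi.neg_apply, StepOk] at he ⊢
  · exact (WithTop.coe_lt_coe.mpr (by linarith)).trans_le (hg e).2
  · linarith [(hg e).1]

lemma isCirculation_sub [Fintype E] [DecidableEq V] {N : Network V E} {f g : E → ℝ}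
    (hf : Feasible N f) (hg : Feasible N g) : IsCirculation N (g - f) := fun v => by
  rw [map_sub, ((feasible_iff N).mp hg).2, ((feasible_iff N).mp hf).2, sub_self]

def IsClosedWalk (N : Network V E) (L : List (E ⊕ E)) : Prop :=
  L ≠ [] ∧ L.IsChain (fun a b => stepHead N a = stepTail N b) ∧
    L.getLast?.map (stepHead N) = L.head?.map (stepTail N)

lemma isResidCycle_iff {N : Network V E} {f : E → ℝ} {L : List (E ⊕ E)} :
    IsResidCycle N f L ↔ IsClosedWalk N L ∧ ∀ s ∈ L, StepOk N f s :=
  ⟨fun ⟨hne, hok, hch, hcl⟩ => ⟨⟨hne, hch, hcl⟩, hok⟩,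
    fun ⟨⟨hne, hch, hcl⟩, hok⟩ => ⟨hne, hok, hch, hcl⟩⟩

lemma isClosedWalk_of_cycle_chain {N : Network V E} {L : List (E ⊕ E)} (hne : L ≠ [])
    (h : Cycle.Chain (fun a b => stepHead N a = stepTail N b) (L : Cycle (E ⊕ E))) :
    IsClosedWalk N L := by
  rw [Cycle.chain_ne_nil _ hne, List.isChain_cons] at h
  obtain ⟨a, l, rfl⟩ := List.exists_cons_of_ne_nil hne
  exact ⟨hne, h.2, by simpa [List.getLast?_eq_some_getLast] using h.1⟩

lemma IsClosedWalk.sum_map_sub_eq_zero {G : Type*} [AddCommGroup G] {N : Network V E}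
    {L : List (E ⊕ E)} (hL : IsClosedWalk N L) (φ : V → G) :
    (L.map fun s => φ (stepTail N s) - φ (stepHead N s)).sum = 0 := by
  obtain ⟨hne, hch, hcl⟩ := hL
  obtain ⟨a, l, rfl⟩ := List.exists_cons_of_ne_nil hne
  simp only [List.getLast?_eq_some_getLast (List.cons_ne_nil a l), List.head?_cons,
    Option.map_some, Option.some.injEq] at hcl
  rw [List.sum_map_sub_of_isChain _ _ φ hch, hcl, sub_self]

section Walk

variable [DecidableEq E]

def stepFlow : E ⊕ E → E → ℝ := Sum.elim (fun e => Pi.single e 1) (fun e => -Pi.single e 1)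

def walkFlow (L : List (E ⊕ E)) : E → ℝ := (L.map stepFlow).sum

lemma walkFlow_cons (t : E ⊕ E) (L : List (E ⊕ E)) :
    walkFlow (t :: L) = stepFlow t + walkFlow L := by
  rw [walkFlow, List.map_cons, List.sum_cons, walkFlow]

lemma stepValue_stepFlow (t s : E ⊕ E) :
    stepValue (stepFlow t) s = (if t = s then 1 else 0) - (if t = s.swap then 1 else 0) := by
  rcases t with t | t <;> rcases s with s | s <;>
    simp [stepValue, stepFlow, Pi.single_apply, eq_comm]

lemma stepValue_walkFlow (L : List (E ⊕ E)) (s : E ⊕ E) :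
    stepValue (walkFlow L) s = (L.map fun t => stepValue (stepFlow t) s).sum := by
  induction L with
  | nil => simp [walkFlow, stepValue]
  | cons t L ih => rw [walkFlow_cons, stepValue_add, ih, List.map_cons, List.sum_cons]

lemma mem_of_stepValue_walkFlow_pos {L : List (E ⊕ E)} {s : E ⊕ E}
    (h : 0 < stepValue (walkFlow L) s) : s ∈ L := by
  induction L with
  | nil => simp [walkFlow, stepValue] at h
  | cons t L ih =>
    by_cases hts : t = s
    · exact hts ▸ List.mem_cons_self
    rw [walkFlow_cons, stepValue_add, stepValue_stepFlow, if_neg hts] at h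
    exact List.mem_cons_of_mem t (ih (by split_ifs at h <;> linarith))

lemma stepValue_walkFlow_of_nodup {L : List (E ⊕ E)} (hnd : L.Nodup) (s : E ⊕ E) :
    stepValue (walkFlow L) s =
      (if s ∈ L.toFinset then 1 else 0) - (if s.swap ∈ L.toFinset then 1 else 0) := by
  rw [stepValue_walkFlow, ← List.sum_toFinset _ hnd]
  simp [stepValue_stepFlow, sum_sub_distrib]

lemma pos_of_stepValue_sub_smul_walkFlow_pos {d : E → ℝ} {L : List (E ⊕ E)} {δ : ℝ}
    (hnd : L.Nodup) (hδ : 0 < δ) (hL : ∀ s ∈ L, δ ≤ stepValue d s) {s : E ⊕ E}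
    (hs : 0 < stepValue (d - δ • walkFlow L) s) : 0 < stepValue d s := by
  rw [stepValue_sub_smul, stepValue_walkFlow_of_nodup hnd] at hs
  by_cases h₁ : s ∈ L
  · exact hδ.trans_le (hL s h₁)
  rw [if_neg (mt List.mem_toFinset.mp h₁)] at hs
  by_cases h₂ : s.swap ∈ L
  · rw [if_pos (List.mem_toFinset.mpr h₂)] at hs
    linarith [hL _ h₂, stepValue_swap d s]
  · rw [if_neg (mt List.mem_toFinset.mp h₂)] at hs
    linarith

lemma stepValue_sub_smul_walkFlow_self {d : E → ℝ} {L : List (E ⊕ E)} (hnd : L.Nodup)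
    (hL : ∀ s ∈ L, 0 < stepValue d s) {s : E ⊕ E} (hs : s ∈ L) :
    stepValue (d - stepValue d s • walkFlow L) s = 0 := by
  rw [stepValue_sub_smul, stepValue_walkFlow_of_nodup hnd, if_pos (List.mem_toFinset.mpr hs),
    if_neg fun h => by linarith [hL _ (List.mem_toFinset.mp h), hL s hs, stepValue_swap d s]]
  ring

lemma isResidualDirection_walkFlow {N : Network V E} {f : E → ℝ} {L : List (E ⊕ E)}
    (hL : ∀ s ∈ L, StepOk N f s) : IsResidualDirection N f (walkFlow L) := fun _ hs =>
  hL _ (mem_of_stepValue_walkFlow_pos hs)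

variable [Fintype E] (N : Network V E)

lemma flowCost_walkFlow (L : List (E ⊕ E)) : flowCost N (walkFlow L) = listCost N L := by
  rw [← flowCostₗ_apply, walkFlow, map_list_sum, List.map_map, listCost]
  congr 2
  ext (e | e) <;> simp [stepFlow, stepCost, flowCost, Pi.single_apply]

variable [DecidableEq V]

lemma netOutflow_single (e : E) (v : V) :
    N.netOutflow v (Pi.single e 1) =
      (if N.src e = v then 1 else 0) - (if N.dst e = v then 1 else 0) := by
  simp only [netOutflow, LinearMap.coe_mk, AddHom.coe_mk, outflow, inflow]
  rw [sum_eq_single e, sum_eq_single e] <;> simp +contextual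

lemma isCirculation_walkFlow {L : List (E ⊕ E)} (hL : IsClosedWalk N L) :
    IsCirculation N (walkFlow L) := fun v => by
  rw [walkFlow, map_list_sum, List.map_map,
    ← hL.sum_map_sub_eq_zero fun w => if w = v then (1 : ℝ) else 0]
  congr 2
  ext (e | e) <;>
    simp only [stepFlow, Function.comp_apply, Sum.elim_inl, Sum.elim_inr, map_neg,
      netOutflow_single, neg_sub] <;>
    rfl -- up to `Decidable` instances

end Walk

section Decomposition

variable [Fintype E] [DecidableEq V] {N : Network V E}

lemma IsCirculation.exists_step_from {d : E → ℝ} (hd : IsCirculation N d) {s : E ⊕ E}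
    (hs : 0 < stepValue d s) : ∃ t, 0 < stepValue d t ∧ stepHead N s = stepTail N t := by
  by_contra! h
  have hout : N.netOutflow (stepHead N s) d < 0 := by
    rw [netOutflow_eq_sum_stepValue]
    refine sum_neg' (fun t _ => ?_) ⟨s.swap, mem_univ _, ?_⟩
    · split_ifs with ht
      · exact not_lt.mp fun hpos => h t hpos ht.symm
      · rfl
    · rw [if_pos (by cases s <;> rfl), stepValue_swap]
      exact neg_neg_of_pos hs
  exact hout.ne (hd _)

lemma IsCirculation.exists_nodup_closedWalk {d : E → ℝ} (hd : IsCirculation N d)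
    (h : ∃ s, 0 < stepValue d s) :
    ∃ L, IsClosedWalk N L ∧ L.Nodup ∧ ∀ s ∈ L, 0 < stepValue d s := by
  obtain ⟨L, hne, hnd, hpos, hch⟩ :=
    exists_nodup_cycle_chain h fun s hs => hd.exists_step_from hs
  exact ⟨L, isClosedWalk_of_cycle_chain hne hch, hnd, hpos⟩

theorem flowCost_nonneg_of_noNegCycle {f : E → ℝ} (hnn : NoNegCycle N f) {d : E → ℝ}
    (hd : IsCirculation N d) (hres : IsResidualDirection N f d) : 0 ≤ flowCost N d := by
  classical
  induction hn : (univ.filter fun s => 0 < stepValue d s).card using Nat.strong_induction_on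
    generalizing d with
  | _ n ih =>
  by_cases hsupp : ∃ s, 0 < stepValue d s
  swap
  · push Not at hsupp
    have : d = 0 := funext fun e =>
      le_antisymm (hsupp (.inl e)) (by simpa [stepValue] using hsupp (.inr e))
    simp [this, flowCost]
  obtain ⟨L, hL, hnd, hpos⟩ := hd.exists_nodup_closedWalk hsupp
  obtain ⟨s₀, hs₀, hmin⟩ :=
    L.toFinset.exists_min_image (stepValue d) (List.toFinset_nonempty_iff _ |>.mpr hL.1)
  rw [List.mem_toFinset] at hs₀
  set δ := stepValue d s₀
  set d' := d - δ • walkFlow L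
  have hsub (s) : 0 < stepValue d' s → 0 < stepValue d s :=
    pos_of_stepValue_sub_smul_walkFlow_pos hnd (hpos s₀ hs₀)
      fun s hs => hmin s (List.mem_toFinset.mpr hs)
  have hlt : (univ.filter fun s => 0 < stepValue d' s).card < n := by
    rw [← hn]
    refine card_lt_card ((ssubset_iff_of_subset fun s => ?_).mpr ⟨s₀, ?_, ?_⟩)
    · simpa using hsub s
    · simpa using hpos s₀ hs₀
    · simp only [mem_filter, mem_univ, true_and, not_lt]
      exact (stepValue_sub_smul_walkFlow_self hnd hpos hs₀).le
  have hcirc : IsCirculation N d' := fun v => by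
    simp [d', map_sub, map_smul, hd v, isCirculation_walkFlow N hL v]
  have hrest := ih _ hlt hcirc (fun s hs => hres s (hsub s hs)) rfl
  have hcycle := hnn L (isResidCycle_iff.mpr ⟨hL, fun s hs => hres s (hpos s hs)⟩)
  have hsplit : flowCost N d = flowCost N d' + δ * listCost N L := by
    simp only [d', ← flowCostₗ_apply, map_sub, map_smul, smul_eq_mul]
    rw [flowCostₗ_apply N (walkFlow L), flowCost_walkFlow]
    ring
  rw [hsplit]
  exact add_nonneg hrest (mul_nonneg (hpos s₀ hs₀).le hcycle)

theorem flowCost_le_of_noNegCycle {f g : E → ℝ} (hf : Feasible N f) (hg : Feasible N g)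
    (hnn : NoNegCycle N f) : flowCost N f ≤ flowCost N g := by
  have := flowCost_nonneg_of_noNegCycle hnn (isCirculation_sub hf hg) (isResidualDirection_sub hg.1)
  rwa [← flowCostₗ_apply, map_sub, sub_nonneg] at this

end Decomposition

lemma eventually_respectsCap_add_smul [Finite E] {N : Network V E} {f c : E → ℝ}
    (hf : RespectsCap N f) (hc : IsResidualDirection N f c) :
    ∀ᶠ ε in 𝓝[>] (0 : ℝ), RespectsCap N (f + ε • c) := by
  simp only [RespectsCap, Pi.add_apply, Pi.smul_apply, smul_eq_mul, eventually_all]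
  exact fun e => (eventually_le_add_mul (hf e).1 fun h => hc (.inr e) (by simpa [stepValue])).and
    (eventually_coe_add_mul_le (hf e).2 fun h => hc (.inl e) h)

theorem exists_feasible_flowCost_lt [Fintype E] [DecidableEq V] {N : Network V E} {f : E → ℝ}
    (hf : Feasible N f) {L : List (E ⊕ E)} (hL : IsResidCycle N f L) (hneg : listCost N L < 0) :
    ∃ g, Feasible N g ∧ flowCost N g < flowCost N f := by
  classical
  obtain ⟨hwalk, hok⟩ := isResidCycle_iff.mp hL
  obtain ⟨ε, hcap, hε⟩ := ((eventually_respectsCap_add_smul hf.1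
    (isResidualDirection_walkFlow hok)).and self_mem_nhdsWithin).exists
  refine ⟨f + ε • walkFlow L, (feasible_iff N).mpr ⟨hcap, fun v => ?_⟩, ?_⟩
  · rw [map_add, map_smul, isCirculation_walkFlow N hwalk v, smul_zero, add_zero]
    exact ((feasible_iff N).mp hf).2 v
  · rw [← flowCostₗ_apply, map_add, map_smul, flowCostₗ_apply, flowCostₗ_apply,
      flowCost_walkFlow, smul_eq_mul]
    nlinarith [show (0 : ℝ) < ε from hε]

end Network

theorem stmt12_general {V E : Type} [Fintype E] [DecidableEq V]
    (N : Network V E) (f : E → ℝ) (hf : Feasible N f) :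
    (∀ g : E → ℝ, Feasible N g → flowCost N f ≤ flowCost N g) ↔ NoNegCycle N f := by
  refine ⟨fun hmin L hL => ?_, fun hnn g hg => Network.flowCost_le_of_noNegCycle hf hg hnn⟩
  by_contra hneg
  obtain ⟨g, hg, hlt⟩ := Network.exists_feasible_flowCost_lt hf hL (not_le.mp hneg)
  exact (hmin g hg).not_gt hlt

/-- A feasible flow is of minimum cost iff the residual network `G_f`
contains no directed cycle of negative total cost. -/
theorem stmt12 {V E : Type} [Fintype V] [Fintype E] [DecidableEq V]
    (N : Network V E) (f : E → ℝ) (hf : Feasible N f) :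
    (∀ g : E → ℝ, Feasible N g → flowCost N f ≤ flowCost N g) ↔ NoNegCycle N f :=
  stmt12_general N f hf
end

section
/- Given two feasible flows f and g in the same flow network, the difference g − f can be decomposed as a circulation in the residual network G_f: there is a nonnegative flow in G_f, respecting residual capacities, whose net effect on each arc equals g(e) − f(e), and whose residual cost equals cost(g) − cost(f). -/
/-!
Route `g - f` forward along the arcs where `g` exceeds `f` and backward along those where `f`
exceeds `g`. Both residual capacities hold because `f` and `g` obey the same bounds, conservation
holds because `f` and `g` have the same balances, and the cost identity is linearity of `flowCost`.
-/

open Finset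

variable {V E : Type}

section Residual

def netArcFlow (z : E ⊕ E → ℝ) : E → ℝ := z ∘ .inl - z ∘ .inr

variable [Fintype E] (N : Network V E)

theorem outflow_sub [DecidableEq V] (f g : E → ℝ) (v : V) :
    outflow N (f - g) v = outflow N f v - outflow N g v := by
  simp only [outflow, ← sum_sub_distrib, Pi.sub_apply, ite_sub_ite, sub_zero]

theorem inflow_sub [DecidableEq V] (f g : E → ℝ) (v : V) :
    inflow N (f - g) v = inflow N f v - inflow N g v := by
  simp only [inflow, ← sum_sub_distrib, Pi.sub_apply, ite_sub_ite, sub_zero]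

theorem flowCost_sub (f g : E → ℝ) : flowCost N (f - g) = flowCost N f - flowCost N g := by
  simp only [flowCost, ← sum_sub_distrib, Pi.sub_apply, mul_sub]

theorem sum_stepTail_sub_sum_stepHead [DecidableEq V] (z : E ⊕ E → ℝ) (v : V) :
    ((∑ d, if stepTail N d = v then z d else 0) - ∑ d, if stepHead N d = v then z d else 0)
      = outflow N (netArcFlow z) v - inflow N (netArcFlow z) v := by
  rw [netArcFlow, outflow_sub, inflow_sub, Fintype.sum_sum_type, Fintype.sum_sum_type]
  -- forward steps leave `src` and enter `dst`, backward steps the other way round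
  change outflow N (z ∘ .inl) v + inflow N (z ∘ .inr) v
      - (inflow N (z ∘ .inl) v + outflow N (z ∘ .inr) v) = _
  ring

theorem sum_stepCost_mul (z : E ⊕ E → ℝ) :
    ∑ d, stepCost N d * z d = flowCost N (netArcFlow z) := by
  simp only [Fintype.sum_sum_type, stepCost, Sum.elim_inl, Sum.elim_inr, flowCost, netArcFlow,
    Pi.sub_apply, Function.comp_apply, mul_sub, neg_mul, sum_neg_distrib, ← sub_eq_add_neg,
    sum_sub_distrib]

end Residual

section DiffCirculation

variable (f g : E → ℝ)

def diffCirculation : E ⊕ E → ℝ := Sum.elim (g - f)⁺ (g - f)⁻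

theorem diffCirculation_nonneg (d : E ⊕ E) : 0 ≤ diffCirculation f g d := by
  cases d
  · exact posPart_nonneg _
  · exact negPart_nonneg _

theorem netArcFlow_diffCirculation : netArcFlow (diffCirculation f g) = g - f :=
  posPart_sub_negPart (g - f)

variable {f g} (N : Network V E)

theorem add_diffCirculation_inl_le_cap (hf : RespectsCap N f) (hg : RespectsCap N g) (e : E) :
    ((f e + diffCirculation f g (.inl e) : ℝ) : WithTop ℝ) ≤ N.cap e := by
  change ((f e + (g e - f e)⁺ : ℝ) : WithTop ℝ) ≤ N.cap e
  rw [← sup_eq_add_posPart_sub, WithTop.coe_max]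
  exact max_le (hg e).2 (hf e).2

theorem diffCirculation_inr_le (hf : RespectsCap N f) (hg : RespectsCap N g) (e : E) :
    diffCirculation f g (.inr e) ≤ f e - N.low e := by
  change (g e - f e)⁻ ≤ f e - N.low e
  rw [negPart_def, neg_sub]
  exact max_le (sub_le_sub_left (hg e).1 _) (sub_nonneg.2 (hf e).1)

end DiffCirculation

theorem stmt13_general {V E : Type} [Fintype E] [DecidableEq V]
    (N : Network V E) (f g : E → ℝ) (hf : Feasible N f) (hg : Feasible N g) :
    ∃ z : E ⊕ E → ℝ,
      (∀ d, 0 ≤ z d) ∧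
      (∀ e, ((f e + z (Sum.inl e) : ℝ) : WithTop ℝ) ≤ N.cap e) ∧
      (∀ e, z (Sum.inr e) ≤ f e - N.low e) ∧
      (∀ v, (∑ d, if stepTail N d = v then z d else 0)
            = ∑ d, if stepHead N d = v then z d else 0) ∧
      (∀ e, z (Sum.inl e) - z (Sum.inr e) = g e - f e) ∧
      (∑ d, stepCost N d * z d) = flowCost N g - flowCost N f := by
  have hnet := netArcFlow_diffCirculation f g
  refine ⟨diffCirculation f g, diffCirculation_nonneg f g,
    add_diffCirculation_inl_le_cap N hf.1 hg.1, diffCirculation_inr_le N hf.1 hg.1,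
    fun v => ?_, fun e => congrFun hnet e, ?_⟩
  · rw [← sub_eq_zero, sum_stepTail_sub_sum_stepHead, hnet, outflow_sub, inflow_sub,
      sub_sub_sub_comm, hf.2 v, hg.2 v, sub_self]
  · rw [sum_stepCost_mul, hnet, flowCost_sub]

/-- The difference of two feasible flows decomposes as a circulation in the
residual network `G_f`: a nonnegative flow on residual arcs, respecting
residual capacities, with zero net flow at every vertex, whose net effect on
each arc is `g(e) - f(e)` and whose residual cost is `cost(g) - cost(f)`. -/
theorem stmt13 {V E : Type} [Fintype V] [Fintype E] [DecidableEq V]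
    (N : Network V E) (f g : E → ℝ) (hf : Feasible N f) (hg : Feasible N g) :
    ∃ z : E ⊕ E → ℝ,
      (∀ d, 0 ≤ z d) ∧
      (∀ e, ((f e + z (Sum.inl e) : ℝ) : WithTop ℝ) ≤ N.cap e) ∧
      (∀ e, z (Sum.inr e) ≤ f e - N.low e) ∧
      (∀ v, (∑ d, if stepTail N d = v then z d else 0)
            = ∑ d, if stepHead N d = v then z d else 0) ∧
      (∀ e, z (Sum.inl e) - z (Sum.inr e) = g e - f e) ∧
      (∑ d, stepCost N d * z d) = flowCost N g - flowCost N f :=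
  stmt13_general N f g hf hg
end

section
/- Let G be a directed graph and v_o a vertex such that G − v_o is a 'directed fat tree' (its underlying undirected simple graph, after merging parallel/antiparallel edge pairs, is a tree). Then the subgraph of G − v_o consisting of all arcs lying on some directed path from a neighbor of v_o to a fixed vertex v_c, with v_o split into one leaf copy per neighbor, is again a directed fat tree. -/
/-! Every kept vertex lies on a directed path to `v_c` whose arcs are all kept, so the kept graph
is connected. A copy of `v_o` is adjacent only to the neighbour it was split off for, so it is a
leaf and lies on no cycle; on the ordinary vertices the kept graph is a subgraph of the underlying
graph of `G - v_o`, which is a tree. -/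

namespace SimpleGraph

variable {V : Type*} {G : SimpleGraph V}

lemma reachable_fromRel_of_rel {r : V → V → Prop} {a b : V} (h : r a b) :
    (fromRel r).Reachable a b := by
  by_cases hab : a = b
  · exact hab ▸ Reachable.refl a
  · exact Adj.reachable ⟨hab, Or.inl h⟩

lemma IsAcyclic.of_induce_of_subsingleton_neighborSet {s : Set V}
    (hs : (G.induce s).IsAcyclic) (hleaf : ∀ v ∉ s, (G.neighborSet v).Subsingleton) :
    G.IsAcyclic := by
  classical
  intro u p hp
  by_cases hsupp : ∀ x ∈ p.support, x ∈ s
  · refine hs (p.induce s hsupp) ?_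
    have hinj : Function.Injective (Embedding.induce (G := G) s).toHom :=
      (Embedding.induce (G := G) s).injective
    rwa [← Walk.isCycle_map_iff_of_injective hinj, Walk.map_induce]
  · obtain ⟨v, hv, hvs⟩ := not_forall₂.mp hsupp
    have hq := hp.rotate hv
    exact hq.snd_ne_penultimate <|
      hleaf v hvs (Walk.adj_snd hq.not_nil) (Walk.adj_penultimate hq.not_nil).symm

end SimpleGraph

section
variable {V E : Type}
variable (src dst : E → V) (vo : V)

/-- A directed multigraph is a *fat tree* on the vertex set `S` if merging all
arcs with the same endpoints into single undirected edges yields a tree. -/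
def IsFatTree {W : Type} (tl hd : E → W) (A : Set E) : Prop :=
  (SimpleGraph.fromRel (fun a b : W => ∃ e ∈ A, tl e = a ∧ hd e = b)).IsTree

/-- Vertices of the split graph: ordinary vertices (different from `v_o`),
plus one copy of `v_o` for each neighbor `w` of `v_o`. -/
def SplitV : Type :=
  {v : V // v ≠ vo} ⊕
  {w : V // w ≠ vo ∧ ∃ e, (src e = vo ∧ dst e = w) ∨ (dst e = vo ∧ src e = w)}

/-- The split vertex `a` is the tail of arc `e` in the split graph. -/
def AtTail (a : SplitV src dst vo) (e : E) : Prop :=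
  match a with
  | Sum.inl v => src e = v.1
  | Sum.inr w => src e = vo ∧ dst e = w.1

/-- The split vertex `b` is the head of arc `e` in the split graph. -/
def AtHead (b : SplitV src dst vo) (e : E) : Prop :=
  match b with
  | Sum.inl v => dst e = v.1 ∧ dst e ≠ vo
  | Sum.inr w => dst e = vo ∧ src e = w.1

/-- One directed step in the split graph. -/
def SplitStep (a b : SplitV src dst vo) : Prop := ∃ e, AtTail src dst vo a e ∧ AtHead src dst vo b e

/-- Directed reachability in the split graph. -/
def SplitReach : SplitV src dst vo → SplitV src dst vo → Prop :=
  Relation.ReflTransGen (SplitStep src dst vo)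

/-- An arc is kept iff it lies on some directed path from a copy of `v_o`
to `v_c`. -/
def Kept (vc : V) (hvc : vc ≠ vo) (e : E) : Prop :=
  ∃ (w : {w : V // w ≠ vo ∧ ∃ e, (src e = vo ∧ dst e = w) ∨ (dst e = vo ∧ src e = w)})
    (a b : SplitV src dst vo),
    AtTail src dst vo a e ∧ AtHead src dst vo b e ∧
    SplitReach src dst vo (Sum.inr w) a ∧
    SplitReach src dst vo b (Sum.inl ⟨vc, hvc⟩)

/-- The vertices touched by the kept arcs, together with `v_c`. -/
def KeptV (vc : V) (hvc : vc ≠ vo) : Set (SplitV src dst vo) :=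
  {x | x = Sum.inl ⟨vc, hvc⟩ ∨
    ∃ e, Kept src dst vo vc hvc e ∧ (AtTail src dst vo x e ∨ AtHead src dst vo x e)}

/-- The underlying simple graph of `G - v_o`. -/
def underlyingGraph : SimpleGraph {v : V // v ≠ vo} :=
  SimpleGraph.fromRel fun a b => ∃ e, src e = a.1 ∧ dst e = b.1

def keptGraph (vc : V) (hvc : vc ≠ vo) : SimpleGraph (KeptV src dst vo vc hvc) :=
  SimpleGraph.fromRel fun a b =>
    ∃ e, Kept src dst vo vc hvc e ∧ AtTail src dst vo a.1 e ∧ AtHead src dst vo b.1 e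

variable {src dst vo}

/-- A copy of `v_o` is sent to the neighbour it was split off for. -/
def SplitV.anchor : SplitV src dst vo → {v : V // v ≠ vo}
  | .inl v => v
  | .inr w => ⟨w.1, w.2.1⟩

theorem SplitV.anchor_of_eq_inl {x : SplitV src dst vo} {v : {v : V // v ≠ vo}}
    (h : x = .inl v) : x.anchor = v := by
  subst h; rfl

theorem underlyingGraph_isTree
    (hfat : IsFatTree (E := {e : E // src e ≠ vo ∧ dst e ≠ vo})
      (fun e => (⟨src e.1, e.2.1⟩ : {v : V // v ≠ vo}))
      (fun e => (⟨dst e.1, e.2.2⟩ : {v : V // v ≠ vo}))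
      Set.univ) :
    (underlyingGraph src dst vo).IsTree := by
  unfold IsFatTree at hfat
  convert hfat using 2
  unfold underlyingGraph
  congr 1
  ext a b
  simp only [Set.mem_univ, true_and, Subtype.ext_iff, Subtype.exists]
  constructor
  · rintro ⟨e, ha, hb⟩
    exact ⟨e, ⟨ha ▸ a.2, hb ▸ b.2⟩, ha, hb⟩
  · rintro ⟨e, -, h⟩
    exact ⟨e, h⟩

theorem AtTail.unique {a a' : SplitV src dst vo} {e : E}
    (h : AtTail src dst vo a e) (h' : AtTail src dst vo a' e) : a = a' := by
  rcases a with v | w <;> rcases a' with v' | w'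
  · exact congrArg Sum.inl (Subtype.ext (h.symm.trans h'))
  · exact absurd (h.symm.trans h'.1) v.2
  · exact absurd (h.1.symm.trans h') (Ne.symm v'.2)
  · exact congrArg Sum.inr (Subtype.ext (h.2.symm.trans h'.2))

theorem AtHead.unique {b b' : SplitV src dst vo} {e : E}
    (h : AtHead src dst vo b e) (h' : AtHead src dst vo b' e) : b = b' := by
  rcases b with v | w <;> rcases b' with v' | w'
  · exact congrArg Sum.inl (Subtype.ext (h.1.symm.trans h'.1))
  · exact absurd h'.1 h.2
  · exact absurd h.1 h'.2
  · exact congrArg Sum.inr (Subtype.ext (h.2.symm.trans h'.2))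

theorem AtTail.atHead_inl {w} {e : E} (h : AtTail src dst vo (.inr w) e) :
    AtHead src dst vo (.inl ⟨w.1, w.2.1⟩) e :=
  ⟨h.2, h.2 ▸ w.2.1⟩

theorem AtHead.atTail_inl {w} {e : E} (h : AtHead src dst vo (.inr w) e) :
    AtTail src dst vo (.inl ⟨w.1, w.2.1⟩) e :=
  h.2

variable {vc : V} {hvc : vc ≠ vo}

theorem vc_mem_keptV : (.inl ⟨vc, hvc⟩ : SplitV src dst vo) ∈ KeptV src dst vo vc hvc :=
  Or.inl rfl

theorem Kept.splitReach_of_atTail_or_atHead {e : E} {x : SplitV src dst vo}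
    (he : Kept src dst vo vc hvc e) (hx : AtTail src dst vo x e ∨ AtHead src dst vo x e) :
    ∃ w, SplitReach src dst vo (.inr w) x ∧ SplitReach src dst vo x (.inl ⟨vc, hvc⟩) := by
  obtain ⟨w, a, b, ha, hb, hwa, hbvc⟩ := he
  refine ⟨w, ?_⟩
  rcases hx with hx | hx
  · obtain rfl := hx.unique ha
    exact ⟨hwa, .head ⟨e, ha, hb⟩ hbvc⟩
  · obtain rfl := hx.unique hb
    exact ⟨hwa.tail ⟨e, ha, hb⟩, hbvc⟩

/-- Every arc of a directed path from a copy of `v_o` to `v_c` is kept. -/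
theorem keptGraph_reachable_vc {w} {c : SplitV src dst vo}
    (hwc : SplitReach src dst vo (.inr w) c) (hcvc : SplitReach src dst vo c (.inl ⟨vc, hvc⟩))
    (hc : c ∈ KeptV src dst vo vc hvc) :
    (keptGraph src dst vo vc hvc).Reachable ⟨c, hc⟩ ⟨_, vc_mem_keptV⟩ := by
  induction hcvc using Relation.ReflTransGen.head_induction_on with
  | refl => rfl
  | @head c c' hstep hc'vc ih =>
    obtain ⟨e, htail, hhead⟩ := hstep
    have he : Kept src dst vo vc hvc e := ⟨w, c, c', htail, hhead, hwc, hc'vc⟩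
    exact (SimpleGraph.reachable_fromRel_of_rel ⟨e, he, htail, hhead⟩).trans
      (ih (hwc.tail ⟨e, htail, hhead⟩) (Or.inr ⟨e, he, Or.inr hhead⟩))

theorem keptGraph_connected : (keptGraph src dst vo vc hvc).Connected := by
  have hreach (x : KeptV src dst vo vc hvc) :
      (keptGraph src dst vo vc hvc).Reachable x ⟨_, vc_mem_keptV⟩ := by
    obtain ⟨x, rfl | ⟨e, he, hx⟩⟩ := x
    · rfl
    · obtain ⟨w, hwx, hxvc⟩ := he.splitReach_of_atTail_or_atHead hx
      exact keptGraph_reachable_vc hwx hxvc _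
  exact (SimpleGraph.connected_iff _).2
    ⟨fun x y => (hreach x).trans (hreach y).symm, ⟨⟨_, vc_mem_keptV⟩⟩⟩

theorem keptGraph_neighbor_of_eq_inr {x y : KeptV src dst vo vc hvc} {w}
    (hx : x.1 = .inr w) (hxy : (keptGraph src dst vo vc hvc).Adj x y) :
    y.1 = .inl ⟨w.1, w.2.1⟩ := by
  obtain ⟨-, ⟨e, -, htail, hhead⟩ | ⟨e, -, htail, hhead⟩⟩ := hxy
  · rw [hx] at htail
    exact hhead.unique htail.atHead_inl
  · rw [hx] at hhead
    exact htail.unique hhead.atTail_inl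

theorem underlyingGraph_adj_of_keptGraph_adj {x y : KeptV src dst vo vc hvc} {u v : {v : V // v ≠ vo}}
    (hx : x.1 = .inl u) (hy : y.1 = .inl v) (hxy : (keptGraph src dst vo vc hvc).Adj x y) :
    (underlyingGraph src dst vo).Adj u v := by
  have huv : u ≠ v := fun huv => hxy.ne (Subtype.ext (hx.trans (huv ▸ hy.symm)))
  obtain ⟨-, ⟨e, -, htail, hhead⟩ | ⟨e, -, htail, hhead⟩⟩ := hxy
  · rw [hx] at htail
    rw [hy] at hhead
    exact ⟨huv, Or.inl ⟨e, htail, hhead.1⟩⟩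
  · rw [hy] at htail
    rw [hx] at hhead
    exact ⟨huv, Or.inr ⟨e, htail, hhead.1⟩⟩

def keptGraphInduceHom :
    (keptGraph src dst vo vc hvc).induce {x | ∃ v, x.1 = .inl v} →g underlyingGraph src dst vo where
  toFun x := SplitV.anchor x.1.1
  map_rel' {x y} hxy := by
    obtain ⟨u, hu⟩ := x.2
    obtain ⟨v, hv⟩ := y.2
    rw [SplitV.anchor_of_eq_inl hu, SplitV.anchor_of_eq_inl hv]
    exact underlyingGraph_adj_of_keptGraph_adj hu hv hxy

theorem keptGraphInduceHom_injective :
    Function.Injective (keptGraphInduceHom (src := src) (dst := dst) (vc := vc) (hvc := hvc)) := by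
  rintro ⟨x, u, hu⟩ ⟨y, v, hv⟩ hxy
  change SplitV.anchor x.1 = SplitV.anchor y.1 at hxy
  rw [SplitV.anchor_of_eq_inl hu, SplitV.anchor_of_eq_inl hv] at hxy
  subst hxy
  exact Subtype.ext (Subtype.ext (hu.trans hv.symm))

theorem keptGraph_isAcyclic (h : (underlyingGraph src dst vo).IsAcyclic) :
    (keptGraph src dst vo vc hvc).IsAcyclic := by
  refine .of_induce_of_subsingleton_neighborSet (h.comap _ keptGraphInduceHom_injective) ?_
  intro x hx y hy z hz
  obtain ⟨w, hw⟩ : ∃ w, x.1 = .inr w := by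
    rcases hx1 : x.1 with v | w
    · exact absurd ⟨v, hx1⟩ hx
    · exact ⟨w, rfl⟩
  exact Subtype.ext ((keptGraph_neighbor_of_eq_inr hw hy).trans (keptGraph_neighbor_of_eq_inr hw hz).symm)

variable (src dst vo)

theorem stmt15
    (vc : V) (hvc : vc ≠ vo)
    (hfat : IsFatTree (E := {e : E // src e ≠ vo ∧ dst e ≠ vo})
      (fun e => (⟨src e.1, e.2.1⟩ : {v : V // v ≠ vo}))
      (fun e => (⟨dst e.1, e.2.2⟩ : {v : V // v ≠ vo}))
      Set.univ) :
    (SimpleGraph.fromRel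
      (fun a b : KeptV src dst vo vc hvc =>
        ∃ e, Kept src dst vo vc hvc e ∧
          AtTail src dst vo a.1 e ∧ AtHead src dst vo b.1 e)).IsTree :=
  ⟨keptGraph_connected, keptGraph_isAcyclic (underlyingGraph_isTree hfat).isAcyclic⟩

end
end

section
/- If the min-cost circulation problem on a plane graph G has a finite optimum, then the optimal value of the face-potential LP on the geometric dual equals the optimal value of the min-cost transshipment problem on the network G^ built from the capacitated dual darts (with balances given by the face costs c(h) and arc costs given by the dart capacities), and hence equals the optimal value of the original min-cost circulation problem. -/
/-!
Potential differences `e ↦ π (G.right e) - π (G.left e)` are exactly the circulations of `G`.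
Face boundaries are circulations, so potential differences are; conversely, the space of
potential differences has dimension `|H| - 1` (the dual graph is connected) and the cycle space
has dimension `|E| - |V| + 1` (the primal graph is connected), and these agree by Euler's
formula. Hence the face-potential LP is the circulation problem in face coordinates, with the
same values. The transshipment problem on `G^` is its LP dual, and strong duality follows from
Farkas' lemma, for which the cone generated by finitely many vectors is closed by the conical
Carathéodory theorem.
-/

open Finset

variable {V E H : Type}

open Matrix PointedCone

section ConicalCombination

variable {ι M : Type*} [AddCommGroup M] [Module ℝ M]

theorem exists_erase_sum_smul_eq [DecidableEq ι] (v : ι → M) {s : Finset ι} {φ d : ι → ℝ}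
    (hφ : ∀ i ∈ s, 0 ≤ φ i) (hd : ∑ i ∈ s, d i • v i = 0) (hpos : ∃ i ∈ s, 0 < d i) :
    ∃ j ∈ s, ∃ ψ : ι → ℝ, (∀ i ∈ s.erase j, 0 ≤ ψ i) ∧
      ∑ i ∈ s.erase j, ψ i • v i = ∑ i ∈ s, φ i • v i := by
  obtain ⟨j, hj, hmin⟩ := (s.filter (0 < d ·)).exists_min_image (fun i => φ i / d i)
    (by simpa [Finset.Nonempty] using hpos)
  rw [mem_filter] at hj
  set t := φ j / d j
  have ht : 0 ≤ t := div_nonneg (hφ j hj.1) hj.2.le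
  have hle : ∀ i ∈ s, t * d i ≤ φ i := by
    intro i hi
    rcases lt_or_ge 0 (d i) with hdi | hdi
    · exact (le_div_iff₀ hdi).1 (hmin i (mem_filter.2 ⟨hi, hdi⟩))
    · exact (mul_nonpos_of_nonneg_of_nonpos ht hdi).trans (hφ i hi)
  refine ⟨j, hj.1, fun i => φ i - t * d i,
    fun i hi => sub_nonneg.2 (hle i (mem_of_mem_erase hi)), ?_⟩
  rw [sum_erase _ (by simp [t, div_mul_cancel₀ _ hj.2.ne'])]
  simp only [sub_smul, mul_smul, sum_sub_distrib, ← smul_sum, hd, smul_zero, sub_zero]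

/-- Conical Carathéodory theorem. -/
theorem exists_linearIndepOn_sum_smul_eq [DecidableEq ι] (v : ι → M) (s : Finset ι) {φ : ι → ℝ}
    (hφ : ∀ i ∈ s, 0 ≤ φ i) :
    ∃ t ⊆ s, LinearIndepOn ℝ v (t : Set ι) ∧ ∃ ψ : ι → ℝ, (∀ i ∈ t, 0 ≤ ψ i) ∧
      ∑ i ∈ t, ψ i • v i = ∑ i ∈ s, φ i • v i := by
  induction s using Finset.strongInduction generalizing φ with
  | H s ih =>
  by_cases hs : LinearIndepOn ℝ v (s : Set ι)
  · exact ⟨s, subset_rfl, hs, φ, hφ, rfl⟩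
  obtain ⟨d, hd, i, hi, hdi⟩ : ∃ d : ι → ℝ, ∑ i ∈ s, d i • v i = 0 ∧ ∃ i ∈ s, d i ≠ 0 := by
    simpa [linearIndepOn_finset_iff] using hs
  obtain ⟨d, hd, hpos⟩ : ∃ d : ι → ℝ, ∑ i ∈ s, d i • v i = 0 ∧ ∃ i ∈ s, 0 < d i := by
    rcases hdi.lt_or_gt with hneg | hpos
    · exact ⟨-d, by simp [neg_smul, hd], i, hi, by simpa using hneg⟩
    · exact ⟨d, hd, i, hi, hpos⟩
  obtain ⟨j, hj, ψ, hψ, hsum⟩ := exists_erase_sum_smul_eq v hφ hd hpos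
  obtain ⟨t, hts, ht, χ, hχ, hsum'⟩ := ih _ (erase_ssubset hj) hψ
  exact ⟨t, hts.trans (erase_subset _ _), ht, χ, hχ, hsum'.trans hsum⟩

variable [Fintype ι]

theorem exists_nonneg_sum_smul_eq_of_mem_hull {v : ι → M} {x : M}
    (hx : x ∈ hull ℝ (Set.range v)) : ∃ φ : ι → ℝ, 0 ≤ φ ∧ ∑ i, φ i • v i = x := by
  obtain ⟨c, rfl⟩ := (Submodule.mem_span_range_iff_exists_fun _).1 hx
  exact ⟨fun i => c i, fun i => (c i).2, by simp⟩

theorem isClosed_hull_range [TopologicalSpace M] [IsTopologicalAddGroup M] [ContinuousSMul ℝ M]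
    [T2Space M] (v : ι → M) : IsClosed (hull ℝ (Set.range v) : Set M) := by
  classical
  have hunion : (hull ℝ (Set.range v) : Set M) =
      ⋃ t : {t : Finset ι // LinearIndepOn ℝ v (t : Set ι)},
        Fintype.linearCombination ℝ (fun i : t.1 => v i) '' Set.Ici 0 := by
    ext x
    simp only [Set.mem_iUnion, Set.mem_image, SetLike.mem_coe, Fintype.linearCombination_apply]
    constructor
    · intro hx
      obtain ⟨φ, hφ, rfl⟩ := exists_nonneg_sum_smul_eq_of_mem_hull hx
      obtain ⟨t, -, ht, ψ, hψ, hsum⟩ := exists_linearIndepOn_sum_smul_eq v univ fun i _ => hφ i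
      exact ⟨⟨t, ht⟩, fun i => ψ i, fun i => hψ i i.2, (sum_coe_sort t _).trans hsum⟩
    · rintro ⟨t, ψ, hψ, rfl⟩
      exact Submodule.sum_mem _ fun i _ => smul_mem _ (hψ i) (subset_hull ⟨i, rfl⟩)
  rw [hunion]
  refine isClosed_iUnion_of_finite fun t => ?_
  have hinj := linearIndependent_iff_injective_fintypeLinearCombination.1 t.2
  exact (LinearMap.isClosedEmbedding_of_injective (LinearMap.ker_eq_bot.2 hinj)).isClosedMap _
    isClosed_Ici

end ConicalCombination

namespace Matrix

variable {m n : Type*} [Fintype m] [Fintype n]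

/-- Farkas' lemma. -/
theorem exists_nonneg_vecMul_eq_of_forall (A : Matrix m n ℝ) (b : n → ℝ)
    (h : ∀ y, 0 ≤ A *ᵥ y → 0 ≤ b ⬝ᵥ y) : ∃ φ, 0 ≤ φ ∧ φ ᵥ* A = b := by
  classical
  let C : ProperCone ℝ (n → ℝ) := ⟨hull ℝ (Set.range A), isClosed_hull_range A⟩
  by_contra! hb
  have hbC : b ∉ C := fun hbC => by
    obtain ⟨φ, hφ, hsum⟩ := exists_nonneg_sum_smul_eq_of_mem_hull hbC
    exact hb φ hφ (by rw [vecMul_eq_sum, hsum])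
  obtain ⟨f, hfC, hfb⟩ := C.hyperplane_separation_point hbC
  set y : n → ℝ := fun k => f fun j => if k = j then 1 else 0
  have hf : ∀ z, f z = z ⬝ᵥ y := fun z => by
    simpa [dotProduct] using LinearMap.pi_apply_eq_sum_univ f.toLinearMap z
  have hAy : 0 ≤ A *ᵥ y := fun i => by
    simpa [mulVec, ← hf] using hfC _ (subset_hull ⟨i, rfl⟩)
  linarith [h y hAy, hf b]

theorem neg_dotProduct_le_dotProduct {A : Matrix m n ℝ} {w : m → ℝ} {b : n → ℝ} {π : n → ℝ}
    {φ : m → ℝ} (hπ : A *ᵥ π ≤ w) (hφ : 0 ≤ φ) (hφA : φ ᵥ* A = -b) : -(b ⬝ᵥ π) ≤ w ⬝ᵥ φ :=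
  calc -(b ⬝ᵥ π) = φ ⬝ᵥ (A *ᵥ π) := by rw [dotProduct_mulVec, hφA, neg_dotProduct]
    _ ≤ φ ⬝ᵥ w := dotProduct_le_dotProduct_of_nonneg_left hπ hφ
    _ = w ⬝ᵥ φ := dotProduct_comm _ _

theorem isLeast_dual_of_isLeast (A : Matrix m n ℝ) (w : m → ℝ) (b : n → ℝ) {x : ℝ}
    (hx : IsLeast {y | ∃ π, A *ᵥ π ≤ w ∧ y = b ⬝ᵥ π} x) :
    IsLeast {y | ∃ φ, 0 ≤ φ ∧ φ ᵥ* A = -b ∧ y = w ⬝ᵥ φ} (-x) := by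
  obtain ⟨⟨π₀, hπ₀, rfl⟩, hmin⟩ := hx
  refine ⟨?_, fun y ⟨φ, hφ, hφA, hy⟩ => hy ▸ neg_dotProduct_le_dotProduct hπ₀ hφ hφA⟩
  -- Farkas' lemma applied to the homogenized system gives `φ ≥ 0`, `s ≥ 0` with
  -- `φ ᵥ* A = -b` and `w ⬝ᵥ φ + s = -x`.
  let A' : Matrix (Option m) (Option n) ℝ := fun i k =>
    i.elim (k.elim 1 fun _ => 0) fun i => k.elim (w i) (A i)
  let b' : Option n → ℝ := fun k => k.elim (-(b ⬝ᵥ π₀)) (-b ·)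
  have hhomog : ∀ μ : n → ℝ, ∀ t : ℝ, 0 ≤ t → 0 ≤ A *ᵥ μ + t • w →
      (b ⬝ᵥ π₀) * t + b ⬝ᵥ μ ≤ 0 := by
    intro μ t ht hμ
    -- this feasible point covers the cases `t = 0` and `t > 0` at once
    have hfeas : A *ᵥ ((1 + t)⁻¹ • (π₀ - μ)) ≤ w := fun i => by
      have h₁ := hπ₀ i
      have h₂ := hμ i
      simp only [mulVec_smul, mulVec_sub, Pi.smul_apply, Pi.sub_apply, Pi.add_apply,
        Pi.zero_apply, smul_eq_mul] at h₂ ⊢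
      rw [inv_mul_le_iff₀ (by positivity)]
      nlinarith
    have hle := hmin ⟨_, hfeas, rfl⟩
    rw [dotProduct_smul, dotProduct_sub, smul_eq_mul, le_inv_mul_iff₀ (by positivity)] at hle
    linarith
  obtain ⟨φ', hφ', hφ'A⟩ := exists_nonneg_vecMul_eq_of_forall A' b' fun y hy => by
    have ht : 0 ≤ y none := by simpa [A', mulVec, dotProduct, Fintype.sum_option] using hy none
    have hμ : 0 ≤ A *ᵥ (fun k => y (some k)) + y none • w := fun i => by
      simpa [A', mulVec, dotProduct, Fintype.sum_option, add_comm, mul_comm] using hy (some i)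
    have := hhomog _ _ ht hμ
    simp only [b', dotProduct, Fintype.sum_option, Option.elim, neg_mul,
      Finset.sum_neg_distrib] at this ⊢
    linarith
  have hbal : (fun i => φ' (some i)) ᵥ* A = -b := funext fun k => by
    simpa [A', b', vecMul, dotProduct, Fintype.sum_option] using congrFun hφ'A (some k)
  have hval : φ' none + w ⬝ᵥ (fun i => φ' (some i)) = -(b ⬝ᵥ π₀) := by
    simpa [A', b', vecMul, dotProduct, Fintype.sum_option, mul_comm] using congrFun hφ'A none
  have hweak := neg_dotProduct_le_dotProduct hπ₀ (fun i => hφ' (some i)) hbal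
  have hslack : 0 ≤ φ' none := hφ' none
  exact ⟨_, fun i => hφ' (some i), hbal, by linarith⟩

end Matrix

theorem eq_of_reflTransGen_adj {X W α : Type*} {a b : X → W} {p : W → α}
    (hp : ∀ x, p (a x) = p (b x)) {w w' : W}
    (h : Relation.ReflTransGen (fun w w' => ∃ x, (a x = w ∧ b x = w') ∨ (a x = w' ∧ b x = w))
      w w') : p w = p w' := by
  induction h with
  | refl => rfl
  | tail _ hadj ih =>
    obtain ⟨x, ⟨rfl, rfl⟩ | ⟨rfl, rfl⟩⟩ := hadj
    exacts [ih.trans (hp x), ih.trans (hp x).symm]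

section SignedIncidence

variable {X W : Type*} [DecidableEq W]

def signedIncidence (head tail : X → W) : Matrix X W ℝ :=
  Matrix.of fun x w => (if head x = w then 1 else 0) - (if tail x = w then 1 else 0)

theorem signedIncidence_mulVec [Fintype W] (head tail : X → W) (p : W → ℝ) :
    signedIncidence head tail *ᵥ p = fun x => p (head x) - p (tail x) := by
  ext x
  simp [signedIncidence, mulVec, dotProduct, sub_mul]

theorem vecMul_signedIncidence [Fintype X] (head tail : X → W) (f : X → ℝ) (w : W) :
    (f ᵥ* signedIncidence head tail) w =
      (∑ x, if head x = w then f x else 0) - (∑ x, if tail x = w then f x else 0) := by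
  simp [signedIncidence, vecMul, dotProduct, mul_sub, sum_sub_distrib]

theorem card_le_rank_signedIncidence_add_one [Fintype W] (head tail : X → W)
    (hconst : ∀ p : W → ℝ, (∀ x, p (head x) = p (tail x)) → ∀ w w', p w = p w') :
    Fintype.card W ≤ (signedIncidence head tail).rank + 1 := by
  have hker : Module.finrank ℝ (LinearMap.ker (signedIncidence head tail).mulVecLin) ≤ 1 := by
    refine finrank_le_one ⟨fun _ => 1, by ext; simp [signedIncidence_mulVec]⟩ fun ⟨p, hp⟩ => ?_
    have hp' : ∀ x, p (head x) = p (tail x) := fun x => by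
      simpa [signedIncidence_mulVec, sub_eq_zero] using congrFun hp x
    rcases isEmpty_or_nonempty W with _ | ⟨⟨w₀⟩⟩
    · exact ⟨0, Subsingleton.elim _ _⟩
    · exact ⟨p w₀, Subtype.ext (funext fun w => by simp [hconst p hp' w₀ w])⟩
  have hnullity := LinearMap.finrank_range_add_finrank_ker (signedIncidence head tail).mulVecLin
  rw [Module.finrank_fintype_fun_eq_card] at hnullity
  rw [rank]
  omega

end SignedIncidence

namespace PlaneGraph

variable [Fintype E] (G : PlaneGraph V E H)

theorem netAt_eq_mulVec_transpose [DecidableEq V] (f : E → ℝ) :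
    netAt G f = (signedIncidence G.src G.dst)ᵀ *ᵥ f := by
  ext v
  rw [mulVec_transpose, vecMul_signedIncidence, netAt]

variable [DecidableEq H]

theorem faceCost_eq_vecMul (c : E → ℝ) : faceCost G c = c ᵥ* signedIncidence G.right G.left :=
  funext fun h => (vecMul_signedIncidence _ _ c h).symm

theorem sum_faceCost_mul [Fintype H] (c : E → ℝ) (π : H → ℝ) :
    ∑ h, faceCost G c h * π h = ∑ e, c e * (π (G.right e) - π (G.left e)) := by
  change faceCost G c ⬝ᵥ π = c ⬝ᵥ fun e => π (G.right e) - π (G.left e)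
  rw [faceCost_eq_vecMul, ← dotProduct_mulVec, signedIncidence_mulVec]

variable {G}

theorem transpose_mul_signedIncidence_eq_zero [Fintype H] [DecidableEq V] (hface : FaceCond G) :
    (signedIncidence G.src G.dst)ᵀ * signedIncidence G.right G.left = 0 := by
  ext v h
  have hvh := hface h v
  rw [netAt_eq_mulVec_transpose] at hvh
  simpa [mul_apply, mulVec, dotProduct, faceFlow, signedIncidence] using hvh

theorem range_mulVecLin_eq_ker [Fintype V] [Fintype H] [DecidableEq V]
    (hconn : PrimalConnected G) (hdual : DualConnected G) (heuler : EulerFormula V E H)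
    (hface : FaceCond G) :
    LinearMap.range (signedIncidence G.right G.left).mulVecLin =
      LinearMap.ker (signedIncidence G.src G.dst)ᵀ.mulVecLin := by
  apply Submodule.eq_of_le_of_finrank_le
  · rw [LinearMap.range_le_ker_iff, ← mulVecLin_mul, transpose_mul_signedIncidence_eq_zero hface,
      mulVecLin_zero]
  · have hV := card_le_rank_signedIncidence_add_one G.src G.dst
      fun p hp _ _ => eq_of_reflTransGen_adj hp (hconn _ _)
    have hH := card_le_rank_signedIncidence_add_one G.right G.left
      fun p hp _ _ => eq_of_reflTransGen_adj (fun e => (hp e).symm) (hdual _ _)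
    have hE := LinearMap.finrank_range_add_finrank_ker (signedIncidence G.src G.dst)ᵀ.mulVecLin
    rw [Module.finrank_fintype_fun_eq_card, ← rank, rank_transpose] at hE
    rw [rank] at hH
    unfold EulerFormula at heuler
    omega

theorem exists_potential_of_netAt_eq_zero [Fintype V] [Fintype H] [DecidableEq V]
    (hconn : PrimalConnected G) (hdual : DualConnected G) (heuler : EulerFormula V E H)
    (hface : FaceCond G) {f : E → ℝ} (hf : ∀ v, netAt G f v = 0) :
    ∃ π : H → ℝ, ∀ e, f e = π (G.right e) - π (G.left e) := by
  have hker : f ∈ LinearMap.ker (signedIncidence G.src G.dst)ᵀ.mulVecLin := by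
    rw [LinearMap.mem_ker, mulVecLin_apply, ← netAt_eq_mulVec_transpose]
    exact funext hf
  rw [← range_mulVecLin_eq_ker hconn hdual heuler hface] at hker
  obtain ⟨π, hπ⟩ := hker
  exact ⟨π, fun e => by rw [← hπ, mulVecLin_apply, signedIncidence_mulVec]⟩

theorem netAt_potential_eq_zero [Fintype H] [DecidableEq V] (hface : FaceCond G) (π : H → ℝ)
    (v : V) : netAt G (fun e => π (G.right e) - π (G.left e)) v = 0 := by
  rw [← signedIncidence_mulVec, netAt_eq_mulVec_transpose, mulVec_mulVec,
    transpose_mul_signedIncidence_eq_zero hface, zero_mulVec]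
  rfl

variable (G) (c u ℓ : E → ℝ)

def circulationCosts [DecidableEq V] : Set ℝ :=
  {x | ∃ f : E → ℝ, (∀ v, netAt G f v = 0) ∧ (∀ e, ℓ e ≤ f e ∧ f e ≤ u e) ∧
    x = ∑ e, c e * f e}

def facePotentialCosts [Fintype H] : Set ℝ :=
  {x | ∃ π : H → ℝ,
    (∀ e, π (G.right e) - π (G.left e) ≤ u e ∧ π (G.left e) - π (G.right e) ≤ -(ℓ e)) ∧
    x = ∑ h, faceCost G c h * π h}

def transshipmentCosts : Set ℝ :=
  {x | ∃ φ : E ⊕ E → ℝ, (∀ d, 0 ≤ φ d) ∧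
    (∀ h : H, (∑ d, if Sum.elim G.left G.right d = h then φ d else 0)
      - (∑ d, if Sum.elim G.right G.left d = h then φ d else 0) = faceCost G c h) ∧
    x = ∑ d, Sum.elim u (fun e => -(ℓ e)) d * φ d}

theorem facePotentialCosts_eq [Fintype H] :
    facePotentialCosts G c u ℓ =
      {x | ∃ π, signedIncidence (Sum.elim G.right G.left) (Sum.elim G.left G.right) *ᵥ π ≤
        Sum.elim u (fun e => -(ℓ e)) ∧ x = faceCost G c ⬝ᵥ π} := by
  ext x
  simp only [facePotentialCosts, signedIncidence_mulVec, Pi.le_def, Sum.forall, Sum.elim_inl,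
    Sum.elim_inr, forall_and, dotProduct]

theorem transshipmentCosts_eq [Fintype H] :
    transshipmentCosts G c u ℓ =
      {x | ∃ φ, 0 ≤ φ ∧
        φ ᵥ* signedIncidence (Sum.elim G.right G.left) (Sum.elim G.left G.right) = -faceCost G c ∧
        x = Sum.elim u (fun e => -(ℓ e)) ⬝ᵥ φ} := by
  have hbalance (a b c : ℝ) : a - b = -c ↔ b - a = c := by rw [← neg_sub, neg_inj]
  ext x
  simp only [transshipmentCosts, funext_iff, vecMul_signedIncidence, Pi.neg_apply, hbalance,
    Pi.le_def, Pi.zero_apply, dotProduct]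

variable {G}

theorem facePotentialCosts_eq_circulationCosts [Fintype V] [Fintype H] [DecidableEq V]
    (hconn : PrimalConnected G) (hdual : DualConnected G) (heuler : EulerFormula V E H)
    (hface : FaceCond G) : facePotentialCosts G c u ℓ = circulationCosts G c u ℓ := by
  ext x
  constructor
  · rintro ⟨π, hπ, rfl⟩
    exact ⟨_, netAt_potential_eq_zero hface π, fun e => ⟨by linarith [(hπ e).2], (hπ e).1⟩,
      sum_faceCost_mul G c π⟩
  · rintro ⟨f, hf, hfb, rfl⟩
    obtain ⟨π, hπ⟩ := exists_potential_of_netAt_eq_zero hconn hdual heuler hface hf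
    refine ⟨π, fun e => ?_, by simp only [sum_faceCost_mul, hπ]⟩
    have := hfb e
    rw [hπ e] at this
    constructor <;> linarith

end PlaneGraph

theorem stmt18_general {V E H : Type} [Fintype V] [Fintype E] [Fintype H]
    [DecidableEq V] [DecidableEq H]
    (G : PlaneGraph V E H)
    (hconn : PrimalConnected G) (hdual : DualConnected G)
    (heuler : EulerFormula V E H) (hface : FaceCond G)
    (c u ℓ : E → ℝ)
    -- value sets of the three problems
    (Scirc : Set ℝ) (hScirc : Scirc =
      {x | ∃ f : E → ℝ, (∀ v, netAt G f v = 0) ∧ (∀ e, ℓ e ≤ f e ∧ f e ≤ u e) ∧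
        x = ∑ e, c e * f e})
    (Sface : Set ℝ) (hSface : Sface =
      {x | ∃ π : H → ℝ,
        (∀ e, π (G.right e) - π (G.left e) ≤ u e ∧
              π (G.left e) - π (G.right e) ≤ -(ℓ e)) ∧
        x = ∑ h, faceCost G c h * π h})
    -- the transshipment network `G^`: one arc per dual dart, from the face on
    -- the left of the dart to the face on its right, with cost the dart capacity
    (Str : Set ℝ) (hStr : Str =
      {x | ∃ φ : E ⊕ E → ℝ, (∀ d, 0 ≤ φ d) ∧
        (∀ h : H,
          (∑ d, if Sum.elim G.left G.right d = h then φ d else 0)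
          - (∑ d, if Sum.elim G.right G.left d = h then φ d else 0)
          = faceCost G c h) ∧
        x = ∑ d, Sum.elim u (fun e => -(ℓ e)) d * φ d})
    -- the circulation problem has a finite optimal solution
    (hopt : ∃ x, IsLeast Scirc x) :
    ∃ x, IsLeast Scirc x ∧ IsLeast Sface x ∧ IsLeast Str (-x) := by
  obtain rfl : Scirc = PlaneGraph.circulationCosts G c u ℓ := hScirc
  obtain rfl : Sface = PlaneGraph.facePotentialCosts G c u ℓ := hSface
  obtain rfl : Str = PlaneGraph.transshipmentCosts G c u ℓ := hStr
  obtain ⟨x, hx⟩ := hopt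
  have hface_least : IsLeast (PlaneGraph.facePotentialCosts G c u ℓ) x := by
    rwa [PlaneGraph.facePotentialCosts_eq_circulationCosts c u ℓ hconn hdual heuler hface]
  refine ⟨x, hx, hface_least, ?_⟩
  rw [PlaneGraph.transshipmentCosts_eq]
  rw [PlaneGraph.facePotentialCosts_eq] at hface_least
  exact Matrix.isLeast_dual_of_isLeast _ _ _ hface_least

/-- If the min-cost circulation problem on a plane graph has a finite optimum,
then its optimal value equals the optimal value of the face-potential LP on
the geometric dual, which in turn coincides (with the sign accounted for by
LP duality) with the optimal value of the min-cost transshipment problem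
`G^` on the capacitated dual darts, with balances the face costs `c(h)` and
arc costs the dart capacities. -/
theorem stmt18 {V E H : Type} [Fintype V] [Fintype E] [Fintype H]
    [DecidableEq V] [DecidableEq H]
    (G : PlaneGraph V E H)
    (hconn : PrimalConnected G) (hdual : DualConnected G)
    (heuler : EulerFormula V E H) (hface : FaceCond G)
    (c u ℓ : E → ℝ) (hlow : ∀ e, 0 ≤ ℓ e ∧ ℓ e ≤ u e)
    -- value sets of the three problems
    (Scirc : Set ℝ) (hScirc : Scirc =
      {x | ∃ f : E → ℝ, (∀ v, netAt G f v = 0) ∧ (∀ e, ℓ e ≤ f e ∧ f e ≤ u e) ∧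
        x = ∑ e, c e * f e})
    (Sface : Set ℝ) (hSface : Sface =
      {x | ∃ π : H → ℝ,
        (∀ e, π (G.right e) - π (G.left e) ≤ u e ∧
              π (G.left e) - π (G.right e) ≤ -(ℓ e)) ∧
        x = ∑ h, faceCost G c h * π h})
    -- the transshipment network `G^`: one arc per dual dart, from the face on
    -- the left of the dart to the face on its right, with cost the dart capacity
    (Str : Set ℝ) (hStr : Str =
      {x | ∃ φ : E ⊕ E → ℝ, (∀ d, 0 ≤ φ d) ∧
        (∀ h : H,
          (∑ d, if Sum.elim G.left G.right d = h then φ d else 0)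
          - (∑ d, if Sum.elim G.right G.left d = h then φ d else 0)
          = faceCost G c h) ∧
        x = ∑ d, Sum.elim u (fun e => -(ℓ e)) d * φ d})
    -- the circulation problem has a finite optimal solution
    (hopt : ∃ x, IsLeast Scirc x) :
    ∃ x, IsLeast Scirc x ∧ IsLeast Sface x ∧ IsLeast Str (-x) :=
  stmt18_general G hconn hdual heuler hface c u ℓ Scirc hScirc Sface hSface Str hStr hopt
end

section
/- Given a flow f with excess e_f(v_o) > 0 at v_o, deficit at v_c, zero excess elsewhere, and no negative-cost cycle in G_f, if there is no directed path from v_o to v_c in the residual network G_f, then the original transshipment problem has no feasible solution. -/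
open Finset

variable {V E : Type}

/-! The vertices reachable from `v_o` in `G_f` form a set `S` containing `v_o` but not `v_c`
that no residual arc leaves. Hence every arc leaving `S` is saturated by `f` and every arc
entering `S` carries its lower bound, so any flow `g` within the capacities sends at most as
much net flow out of `S` as `f` does. For a feasible `g` that net flow is `Σ_{v ∈ S} b(v)`,
while for `f` it is `Σ_{v ∈ S} b(v) - e_f(v_o)`, contradicting `e_f(v_o) > 0`. -/

variable (N : Network V E) (f : E → ℝ)

section Reachability

theorem isResidPath_singleton {d : E ⊕ E} (hd : StepOk N f d) :
    IsResidPath N f (stepTail N d) (stepHead N d) [d] :=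
  ⟨by simpa using hd, List.isChain_singleton _, rfl, rfl⟩

theorem IsResidPath.concat {s t : V} {L : List (E ⊕ E)} (hL : IsResidPath N f s t L)
    {d : E ⊕ E} (hd : StepOk N f d) (htail : stepTail N d = t) :
    IsResidPath N f s (stepHead N d) (L ++ [d]) := by
  obtain ⟨hok, hchain, hhead, hlast⟩ := hL
  have hne : L ≠ [] := by rintro rfl; simp at hhead
  refine ⟨?_, ?_, by rwa [List.head?_append_of_ne_nil _ hne], by simp⟩
  · intro x hx
    rcases List.mem_append.1 hx with hx | hx
    · exact hok x hx
    · rw [List.mem_singleton.1 hx]; exact hd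
  · refine List.isChain_append.2 ⟨hchain, List.isChain_singleton _, ?_⟩
    intro x hx y hy
    obtain rfl : d = y := by simpa using hy
    rw [htail]
    rw [hx] at hlast
    simpa using hlast

/-- `IsResidPath` admits no empty path, hence the disjunct `v = s`. -/
def ResidReachable (s v : V) : Prop :=
  v = s ∨ ∃ L, IsResidPath N f s v L

theorem ResidReachable.step {s : V} {d : E ⊕ E} (hd : StepOk N f d)
    (hr : ResidReachable N f s (stepTail N d)) : ResidReachable N f s (stepHead N d) := by
  right
  rcases hr with hs | ⟨L, hL⟩
  · exact ⟨[d], hs ▸ isResidPath_singleton N f hd⟩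
  · exact ⟨L ++ [d], hL.concat N f hd rfl⟩

end Reachability

section Cuts

def ResidClosed (S : Finset V) : Prop :=
  ∀ d, StepOk N f d → stepTail N d ∈ S → stepHead N d ∈ S

theorem residClosed_reachable [Fintype V] (s : V) [DecidablePred (ResidReachable N f s)] :
    ResidClosed N f (univ.filter (ResidReachable N f s)) := by
  intro d hd
  simpa only [mem_filter, mem_univ, true_and] using ResidReachable.step N f hd

variable [DecidableEq V]

/-- The contribution of an arc to the net flow out of `S`. -/
def cutTerm (S : Finset V) (g : E → ℝ) (e : E) : ℝ :=
  (if N.src e ∈ S then g e else 0) - (if N.dst e ∈ S then g e else 0)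

/-- Arcs leaving a set closed in `G_f` are saturated by `f`; arcs entering it carry their
lower bound. -/
theorem cutTerm_le_of_residClosed {S : Finset V} (hS : ResidClosed N f S) {g : E → ℝ}
    (hg : RespectsCap N g) (e : E) : cutTerm N S g e ≤ cutTerm N S f e := by
  unfold cutTerm
  by_cases hs : N.src e ∈ S <;> by_cases ht : N.dst e ∈ S <;>
    simp only [hs, ht, if_true, if_false, sub_zero, zero_sub, sub_self, le_refl, neg_le_neg_iff]
  · have hsat : ¬ StepOk N f (Sum.inl e) := fun hd => ht (hS _ hd hs)
    have hcap : N.cap e ≤ (f e : WithTop ℝ) := not_lt.1 hsat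
    exact_mod_cast (hg e).2.trans hcap
  · have hlow : ¬ StepOk N f (Sum.inr e) := fun hd => hs (hS _ hd ht)
    exact (not_lt.1 hlow).trans (hg e).1

variable [Fintype E]

theorem sum_outflow_sub_inflow (S : Finset V) (g : E → ℝ) :
    ∑ v ∈ S, (outflow N g v - inflow N g v) = ∑ e, cutTerm N S g e := by
  simp only [sum_sub_distrib, outflow, inflow, cutTerm]
  rw [sum_comm, sum_comm (s := S)]
  simp only [sum_ite_eq]

theorem sum_excess (S : Finset V) :
    ∑ v ∈ S, excess N f v = ∑ v ∈ S, N.bal v - ∑ e, cutTerm N S f e := by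
  rw [← sum_outflow_sub_inflow, ← sum_sub_distrib]
  exact sum_congr rfl fun v _ => by unfold excess; ring

theorem sum_cutTerm_of_feasible {g : E → ℝ} (hg : Feasible N g) (S : Finset V) :
    ∑ e, cutTerm N S g e = ∑ v ∈ S, N.bal v := by
  rw [← sum_outflow_sub_inflow]
  exact sum_congr rfl fun v _ => hg.2 v

theorem sum_excess_nonpos_of_residClosed {S : Finset V} (hS : ResidClosed N f S) {g : E → ℝ}
    (hg : Feasible N g) : ∑ v ∈ S, excess N f v ≤ 0 := by
  have hcut : ∑ e, cutTerm N S g e ≤ ∑ e, cutTerm N S f e :=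
    sum_le_sum fun e _ => cutTerm_le_of_residClosed N f hS hg.1 e
  rw [sum_excess, ← sum_cutTerm_of_feasible N hg S]
  linarith

end Cuts

theorem stmt19_general {V E : Type} [Fintype V] [Fintype E] [DecidableEq V]
    (N : Network V E) (f : E → ℝ) (vo vc : V) (hne : vo ≠ vc)
    (ho : 0 < excess N f vo)
    (hrest : ∀ v, v ≠ vo → v ≠ vc → excess N f v = 0)
    (hnopath : ¬ ∃ L, IsResidPath N f vo vc L) :
    ¬ ∃ g : E → ℝ, Feasible N g := by
  classical
  rintro ⟨g, hg⟩
  let S := univ.filter (ResidReachable N f vo)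
  have hvo : vo ∈ S := by simp [S, ResidReachable]
  have hvc : vc ∉ S := by
    simpa [S, ResidReachable, hne.symm] using hnopath
  have hsum : ∑ v ∈ S, excess N f v = excess N f vo :=
    sum_eq_single_of_mem vo hvo fun v hv hvo' => hrest v hvo' (ne_of_mem_of_not_mem hv hvc)
  have hnonpos := sum_excess_nonpos_of_residClosed N f (residClosed_reachable N f vo) hg
  linarith

/-- If `f` has positive excess at `v_o`, a deficit at `v_c`, zero excess
elsewhere, no negative-cost residual cycle, and there is no directed residual
path from `v_o` to `v_c`, then the transshipment problem is infeasible. -/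
theorem stmt19 {V E : Type} [Fintype V] [Fintype E] [DecidableEq V]
    (N : Network V E) (f : E → ℝ) (vo vc : V) (hne : vo ≠ vc)
    (hcap : RespectsCap N f)
    (hnn : NoNegCycle N f)
    (ho : 0 < excess N f vo) (hc : excess N f vc < 0)
    (hrest : ∀ v, v ≠ vo → v ≠ vc → excess N f v = 0)
    (hnopath : ¬ ∃ L, IsResidPath N f vo vc L) :
    ¬ ∃ g : E → ℝ, Feasible N g :=
  stmt19_general N f vo vc hne ho hrest hnopath
end
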